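/- arXiv:1502.01040 — 7 statements merged into one kernel-verified Lean document; each statement's English description precedes it below -/
import Mathlib

section
/- For every integer n ≥ 1, the invariant ring Rᵀ (the ℂ-subalgebra of R = ℂ[x₁, y₁, …, y_n, x_n] consisting of all polynomials each of whose monomials has ℤⁿ-weight 0) equals the ℂ-subalgebra generated by the three monomials z₁ = x_n^{n+1} ∏_{j=1}^{n} y_j^{j}, z₂ = x₁^{n+1} ∏_{j=1}^{n} y_j^{n+1−j}, and w = x₁ x_n ∏_{j=1}^{n} y_j. -/
open MvPolynomial

/-- The subalgebra of an `Fin n`-multigraded polynomial ring consisting of the polynomials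
all of whose monomials have weight zero (the ring of invariants of the torus action
with weights `w`). -/
noncomputable def invariants {m n : ℕ} (w : Fin m → Fin n → ℤ) :
    Subalgebra ℂ (MvPolynomial (Fin m) ℂ) where
  carrier := {p | ∀ d ∈ p.support, ∀ i : Fin n, ∑ v, (d v : ℤ) * w v i = 0}
  zero_mem' := by
    intro d hd i
    simp at hd
  one_mem' := by
    intro d hd i
    have hd' : d = 0 := by
      by_contra h
      have := MvPolynomial.mem_support_iff.mp hd
      rw [show (1 : MvPolynomial (Fin m) ℂ) = C 1 from (map_one C).symm,
        MvPolynomial.coeff_C, if_neg (Ne.symm h)] at this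
      exact this rfl
    subst hd'
    simp
  add_mem' := by
    intro p q hp hq d hd i
    rcases Finset.mem_union.mp (MvPolynomial.support_add hd) with h | h
    · exact hp d h i
    · exact hq d h i
  mul_mem' := by
    intro p q hp hq d hd i
    obtain ⟨a, ha, b, hb, rfl⟩ := Finset.mem_add.mp (MvPolynomial.support_mul p q hd)
    have key : ∀ v : Fin m, (((a + b) v : ℤ)) * w v i
        = (a v : ℤ) * w v i + (b v : ℤ) * w v i := by
      intro v
      rw [Finsupp.add_apply]
      push_cast
      ring
    rw [Finset.sum_congr rfl fun v _ => key v, Finset.sum_add_distrib,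
      hp a ha i, hq b hb i, add_zero]
  algebraMap_mem' := by
    intro r d hd i
    have hd' : d = 0 := by
      by_contra h
      have := MvPolynomial.mem_support_iff.mp hd
      rw [MvPolynomial.algebraMap_eq, MvPolynomial.coeff_C, if_neg (Ne.symm h)] at this
      exact this rfl
    subst hd'
    simp

/-- Weights of the torus action for the `A_n` singularity: the variables of
`ℂ[x₁, y₁, …, y_n, x_n]` are indexed by `Fin (n+2)` with `0 ↦ x₁`, `j ↦ y_j`
for `1 ≤ j ≤ n` and `n+1 ↦ x_n`; the coordinate `i : Fin n` corresponds to the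
basis vector `e_{i+1}` of `ℤⁿ`.  Thus `w(x₁) = e₁`, `w(x_n) = e_n` and
`w(y_k) = e_{k-1} - 2e_k + e_{k+1}` (with `e₀ = e_{n+1} = 0`). -/
def wA (n : ℕ) (v : Fin (n + 2)) (i : Fin n) : ℤ :=
  if (v : ℕ) = 0 then (if (i : ℕ) = 0 then 1 else 0)
  else if (v : ℕ) = n + 1 then (if (i : ℕ) = n - 1 then 1 else 0)
  else (if (i : ℕ) + 1 = (v : ℕ) - 1 then 1 else 0)
    + (if (i : ℕ) + 1 = (v : ℕ) then -2 else 0)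
    + (if (i : ℕ) + 1 = (v : ℕ) + 1 then 1 else 0)

/-- The variable of index `a` in `ℂ[x₁, y₁, …, y_n, x_n]` (indices as in `wA`). -/
noncomputable def vA (n : ℕ) (a : ℕ) : MvPolynomial (Fin (n + 2)) ℂ :=
  MvPolynomial.X ⟨a % (n + 2), Nat.mod_lt a (by omega)⟩

/-!
A monomial is an eigenvector of the torus, so the invariant ring is spanned by the monomials
of weight zero, and it suffices to show that the weight-zero exponent vectors form the additive
monoid generated by the exponents of `z₁`, `z₂`, `w`. The `e_i`-coordinate of the weight of
`x₁^{a₀} y₁^{a₁} ⋯ y_n^{a_n} x_n^{a_{n+1}}` is the second difference `a_{i-1} - 2a_i + a_{i+1}`,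
so weight zero means that `a_k = a₀ + k q` is an arithmetic progression; according to the sign
of `q` the exponent is `a₀ w + q z₁` or `a_{n+1} w + (-q) z₂`.
-/

section Invariants

variable {m n : ℕ} (w : Fin m → Fin n → ℤ)

def weight (d : Fin m →₀ ℕ) : Fin n → ℤ := fun i => ∑ v, (d v : ℤ) * w v i

theorem mem_invariants_iff {p : MvPolynomial (Fin m) ℂ} :
    p ∈ invariants w ↔ ∀ d ∈ p.support, weight w d = 0 := by
  simp only [funext_iff]
  rfl

theorem monomial_mem_invariants {d : Fin m →₀ ℕ} (hd : weight w d = 0) (c : ℂ) :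
    monomial d c ∈ invariants w :=
  (mem_invariants_iff w).2 fun _ he => by
    rwa [Finset.mem_singleton.1 (support_monomial_subset he)]

theorem MvPolynomial.monomial_one_mem_adjoin {R σ : Type*} [CommSemiring R]
    {S : Set (σ →₀ ℕ)} {d : σ →₀ ℕ} (hd : d ∈ AddSubmonoid.closure S) :
    monomial d (1 : R) ∈ Algebra.adjoin R ((monomial · 1) '' S) := by
  induction hd using AddSubmonoid.closure_induction with
  | mem e he => exact Algebra.subset_adjoin (Set.mem_image_of_mem _ he)
  | zero => simp
  | add a b _ _ ha hb => simpa [monomial_mul] using Subalgebra.mul_mem _ ha hb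

theorem invariants_eq_adjoin_monomial (S : Set (Fin m →₀ ℕ)) (hS : ∀ e ∈ S, weight w e = 0)
    (hgen : ∀ d, weight w d = 0 → d ∈ AddSubmonoid.closure S) :
    invariants w = Algebra.adjoin ℂ ((monomial · 1) '' S) := by
  apply le_antisymm
  · intro p hp
    rw [p.as_sum]
    refine Subalgebra.sum_mem _ fun d hd => ?_
    rw [← mul_one (coeff d p), ← smul_eq_mul, ← smul_monomial]
    exact Subalgebra.smul_mem _
      (monomial_one_mem_adjoin (hgen d ((mem_invariants_iff w).1 hp d hd))) _
  · rw [Algebra.adjoin_le_iff]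
    rintro _ ⟨e, he, rfl⟩
    exact monomial_mem_invariants w (hS e he) 1

end Invariants

theorem eq_add_mul_of_second_diff_eq_zero {f : ℕ → ℤ} {m : ℕ}
    (h : ∀ k, k + 2 ≤ m → f k - 2 * f (k + 1) + f (k + 2) = 0) :
    ∀ k ≤ m, f k = f 0 + k * (f 1 - f 0) := by
  intro k hk
  induction k using Nat.strong_induction_on with
  | _ k ih =>
    match k, ih with
    | 0, _ => simp
    | 1, _ => simp
    | k + 2, ih =>
      have h₀ := ih k (by omega) (by omega)
      have h₁ := ih (k + 1) (by omega) (by omega)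
      have := h k hk
      push_cast at h₁ ⊢
      linarith

section TypeA

open Fin.NatCast

variable {n : ℕ}

variable (n) in
noncomputable def expA (g : ℕ → ℕ) : Fin (n + 2) →₀ ℕ :=
  Finsupp.equivFunOnFinite.symm fun v => g v

@[simp]
theorem expA_apply (g : ℕ → ℕ) (v : Fin (n + 2)) : expA n g v = g v := rfl

theorem monomial_expA (g : ℕ → ℕ) :
    monomial (expA n g) (1 : ℂ) =
      vA n 0 ^ g 0 * (∏ j ∈ Finset.Icc 1 n, vA n j ^ g j) * vA n (n + 1) ^ g (n + 1) := by
  rw [monomial_eq, C_1, one_mul, Finsupp.prod_fintype _ _ fun _ => pow_zero _]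
  have hX : ∀ v : Fin (n + 2), X v ^ expA n g v = vA n v ^ g v := fun v => by
    change _ = X ((v : ℕ) : Fin (n + 2)) ^ _
    rw [Fin.cast_val_eq_self, expA_apply]
  rw [Fintype.prod_congr _ _ hX, Fin.prod_univ_eq_prod_range (fun k => vA n k ^ g k),
    Finset.prod_range_succ, Finset.prod_range_succ', ← Finset.Ico_add_one_right_eq_Icc,
    Finset.prod_Ico_eq_prod_range, Nat.add_sub_cancel]
  simp only [add_comm 1]
  ring

theorem wA_eq_ite (v : Fin (n + 2)) (i : Fin n) :
    wA n v i = (if v = ((i : ℕ) : Fin (n + 2)) then 1 else 0)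
      - 2 * (if v = ((i + 1 : ℕ) : Fin (n + 2)) then 1 else 0)
      + (if v = ((i + 2 : ℕ) : Fin (n + 2)) then 1 else 0) := by
  have := i.isLt
  simp only [wA, Fin.ext_iff, Fin.val_cast_of_lt (by omega : (i : ℕ) < n + 2),
    Fin.val_cast_of_lt (by omega : (i : ℕ) + 1 < n + 2),
    Fin.val_cast_of_lt (by omega : (i : ℕ) + 2 < n + 2)]
  split_ifs <;> omega

theorem weight_wA (d : Fin (n + 2) →₀ ℕ) (i : Fin n) :
    weight (wA n) d i = d ((i : ℕ) : Fin (n + 2)) - 2 * d ((i + 1 : ℕ) : Fin (n + 2))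
      + d ((i + 2 : ℕ) : Fin (n + 2)) := by
  simp only [weight, wA_eq_ite, mul_add, mul_sub, Finset.sum_add_distrib, Finset.sum_sub_distrib,
    mul_ite, mul_one, mul_zero, Finset.sum_ite_eq', Finset.mem_univ, if_true]
  ring

theorem weight_wA_expA {g : ℕ → ℕ}
    (hg : ∀ k, k + 2 ≤ n + 1 → (g k : ℤ) - 2 * g (k + 1) + g (k + 2) = 0) :
    weight (wA n) (expA n g) = 0 := by
  funext i
  have := i.isLt
  simp only [weight_wA, expA_apply, Fin.val_cast_of_lt (by omega : (i : ℕ) < n + 2),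
    Fin.val_cast_of_lt (by omega : (i : ℕ) + 1 < n + 2),
    Fin.val_cast_of_lt (by omega : (i : ℕ) + 2 < n + 2)]
  exact hg i (by omega)

theorem mem_closure_of_weight_wA_eq_zero {d : Fin (n + 2) →₀ ℕ} (hd : weight (wA n) d = 0) :
    d ∈ AddSubmonoid.closure {expA n id, expA n (n + 1 - ·), expA n 1} := by
  set f : ℕ → ℤ := fun k => d k
  have hf_affine := eq_add_mul_of_second_diff_eq_zero (f := f) (m := n + 1) fun k hk =>
    (weight_wA d ⟨k, by omega⟩).symm.trans (congrFun hd _)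
  have hd_affine : ∀ v : Fin (n + 2), (d v : ℤ) = f 0 + v * (f 1 - f 0) := fun v => by
    simpa [f] using hf_affine v (by omega)
  have smul_mem {g} (hg : g ∈ ({expA n id, expA n (n + 1 - ·), expA n 1} : Set _)) (c : ℕ) :
      c • g ∈ AddSubmonoid.closure {expA n id, expA n (n + 1 - ·), expA n 1} :=
    nsmul_mem (AddSubmonoid.subset_closure hg) c
  rcases le_or_gt 0 (f 1 - f 0) with hq | hq
  · have : d = d 0 • expA n 1 + (f 1 - f 0).toNat • expA n id := by
      ext v
      zify
      simp only [Pi.add_apply, Pi.smul_apply, smul_eq_mul, expA_apply, Pi.one_apply, id]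
      push_cast
      rw [Int.toNat_of_nonneg hq, hd_affine]
      simp [f]
      ring
    rw [this]
    exact add_mem (smul_mem (by simp) _) (smul_mem (by simp) _)
  · have : d = d (Fin.last _) • expA n 1 + (f 0 - f 1).toNat • expA n (n + 1 - ·) := by
      ext v
      have := v.isLt
      zify
      simp only [Pi.add_apply, Pi.smul_apply, smul_eq_mul, expA_apply, Pi.one_apply]
      push_cast [(by omega : (v : ℕ) ≤ n + 1)]
      rw [Int.toNat_of_nonneg (by omega), hd_affine, hd_affine (Fin.last _), Fin.val_last]
      push_cast
      ring
    rw [this]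
    exact add_mem (smul_mem (by simp) _) (smul_mem (by simp) _)

end TypeA

theorem statement0_general (n : ℕ) :
    invariants (wA n) =
      Algebra.adjoin ℂ
        { vA n (n + 1) ^ (n + 1) * ∏ j ∈ Finset.Icc 1 n, vA n j ^ j,
          vA n 0 ^ (n + 1) * ∏ j ∈ Finset.Icc 1 n, vA n j ^ (n + 1 - j),
          vA n 0 * vA n (n + 1) * ∏ j ∈ Finset.Icc 1 n, vA n j } := by
  have generators : { vA n (n + 1) ^ (n + 1) * ∏ j ∈ Finset.Icc 1 n, vA n j ^ j,
      vA n 0 ^ (n + 1) * ∏ j ∈ Finset.Icc 1 n, vA n j ^ (n + 1 - j),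
      vA n 0 * vA n (n + 1) * ∏ j ∈ Finset.Icc 1 n, vA n j } =
      (monomial · 1) '' {expA n id, expA n (n + 1 - ·), expA n 1} := by
    simp only [Set.image_insert_eq, Set.image_singleton, monomial_expA]
    simp only [id, Nat.sub_zero, Nat.sub_self, Pi.one_apply, pow_zero, pow_one, one_mul, mul_one]
    ring_nf
  rw [generators]
  refine invariants_eq_adjoin_monomial _ _ ?_ fun d hd => mem_closure_of_weight_wA_eq_zero hd
  rintro _ (rfl | rfl | rfl)
  · exact weight_wA_expA fun k _ => by push_cast [id]; ring
  · exact weight_wA_expA fun k _ => by omega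
  · exact weight_wA_expA fun k _ => by simp

/-- the ring of invariants of the torus action on
`ℂ[x₁, y₁, …, y_n, x_n]` is generated, as a `ℂ`-subalgebra, by the three monomials
`z₁ = x_n^{n+1} ∏ y_j^j`, `z₂ = x₁^{n+1} ∏ y_j^{n+1-j}` and `w = x₁ x_n ∏ y_j`. -/
theorem statement0 (n : ℕ) (hn : 1 ≤ n) :
    invariants (wA n) =
      Algebra.adjoin ℂ
        { vA n (n + 1) ^ (n + 1) * ∏ j ∈ Finset.Icc 1 n, vA n j ^ j,
          vA n 0 ^ (n + 1) * ∏ j ∈ Finset.Icc 1 n, vA n j ^ (n + 1 - j),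
          vA n 0 * vA n (n + 1) * ∏ j ∈ Finset.Icc 1 n, vA n j } :=
  statement0_general n
end

section
/- For every integer k ≥ 2, the set C = {(a, b, c) ∈ ℤ³ : a ≥ 0, b ≥ 0, c ≥ 0, a + 2kb − 2c ≥ 0, and 2c − (2k−2)b − a ≥ 0} is an additive submonoid of ℤ³, and it is generated as an additive monoid by the four elements (2, 0, 1), (0, 1, k−1), (0, 1, k), and (1, 1, k). -/
/-!
Writing `s = a + 2kb - 2c` and `t = 2c - (2k-2)b - a` for the two slack variables of the cone,
one has `s + t = 2b` and `s ≡ t ≡ a (mod 2)`. If `e ∈ {0, 1}` is the parity of `a`, then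
`(a - e)/2`, `(s - e)/2`, `(t - e)/2` and `e` are the multiplicities of `(2,0,1)`, `(0,1,k-1)`,
`(0,1,k)` and `(1,1,k)` in a point of the cone: these generators are exactly the vectors whose
coordinates `(a, s, t)` are `(2,0,0)`, `(0,2,0)`, `(0,0,2)` and `(1,1,1)`.
-/

namespace DSingularity

def cone (k : ℤ) : AddSubmonoid (ℤ × ℤ × ℤ) where
  carrier := {p | 0 ≤ p.1 ∧ 0 ≤ p.2.1 ∧ 0 ≤ p.2.2 ∧
    0 ≤ p.1 + 2 * k * p.2.1 - 2 * p.2.2 ∧ 0 ≤ 2 * p.2.2 - (2 * k - 2) * p.2.1 - p.1}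
  add_mem' := by
    rintro ⟨a, b, c⟩ ⟨a', b', c'⟩ ⟨ha, hb, hc, hs, ht⟩ ⟨ha', hb', hc', hs', ht'⟩
    refine ⟨?_, ?_, ?_, ?_, ?_⟩ <;> dsimp only [Prod.mk_add_mk] <;> linarith
  zero_mem' := by simp

def generators (k : ℤ) : Set (ℤ × ℤ × ℤ) :=
  {(2, 0, 1), (0, 1, k - 1), (0, 1, k), (1, 1, k)}

theorem generators_subset_cone {k : ℤ} (hk : 1 ≤ k) : generators k ⊆ cone k := by
  rintro p (rfl | rfl | rfl | rfl) <;> refine ⟨?_, ?_, ?_, ?_, ?_⟩ <;> dsimp only <;> linarith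

theorem _root_.Int.exists_eq_two_mul_add_of_modEq {x y z : ℤ} (hx : 0 ≤ x) (hy : 0 ≤ y)
    (hz : 0 ≤ z) (hxy : x ≡ y [ZMOD 2]) (hxz : x ≡ z [ZMOD 2]) :
    ∃ n₁ n₂ n₃ e : ℕ, x = 2 * n₁ + e ∧ y = 2 * n₂ + e ∧ z = 2 * n₃ + e := by
  unfold Int.ModEq at hxy hxz
  exact ⟨(x / 2).toNat, (y / 2).toNat, (z / 2).toNat, (x % 2).toNat, by omega, by omega, by omega⟩

theorem exists_nsmul_generators_eq {k : ℤ} {p : ℤ × ℤ × ℤ} (hp : p ∈ cone k) :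
    ∃ n₁ n₂ n₃ n₄ : ℕ,
      p = n₁ • (2, 0, 1) + n₂ • (0, 1, k - 1) + n₃ • (0, 1, k) + n₄ • (1, 1, k) := by
  obtain ⟨a, b, c⟩ := p
  obtain ⟨ha, -, -, hs, ht⟩ := hp
  obtain ⟨n₁, n₂, n₃, n₄, rfl, hs, ht⟩ := Int.exists_eq_two_mul_add_of_modEq ha hs ht
    (Int.modEq_iff_dvd.2 ⟨k * b - c, by ring⟩) (Int.modEq_iff_dvd.2 ⟨c - (k - 1) * b - a, by ring⟩)
  have hb : b = n₂ + n₃ + n₄ :=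
    mul_left_cancel₀ two_ne_zero (by linear_combination hs + ht)
  have hc : c = n₁ + (k - 1) * n₂ + k * n₃ + k * n₄ :=
    mul_left_cancel₀ two_ne_zero (by linear_combination -hs + 2 * k * hb)
  refine ⟨n₁, n₂, n₃, n₄, ?_⟩
  ext <;> simp [hb, hc] <;> ring

theorem closure_generators {k : ℤ} (hk : 1 ≤ k) :
    AddSubmonoid.closure (generators k) = cone k := by
  refine le_antisymm (AddSubmonoid.closure_le.2 (generators_subset_cone hk)) fun p hp => ?_
  obtain ⟨n₁, n₂, n₃, n₄, rfl⟩ := exists_nsmul_generators_eq hp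
  refine add_mem (add_mem (add_mem ?_ ?_) ?_) ?_ <;>
    exact nsmul_mem (AddSubmonoid.subset_closure (by simp [generators])) _

end DSingularity

/-- for `k ≥ 2`, the set
`C = {(a,b,c) ∈ ℤ³ : a ≥ 0, b ≥ 0, c ≥ 0, a + 2kb - 2c ≥ 0, 2c - (2k-2)b - a ≥ 0}`
is an additive submonoid of `ℤ³` generated by `(2,0,1)`, `(0,1,k-1)`, `(0,1,k)` and
`(1,1,k)`; equivalently, membership in the additive monoid closure of these four
elements is characterised exactly by the defining inequalities of `C`. -/
theorem statement2 (k : ℕ) (hk : 2 ≤ k) (p : ℤ × ℤ × ℤ) :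
    p ∈ AddSubmonoid.closure
        ({((2 : ℤ), (0 : ℤ), (1 : ℤ)), (0, 1, (k : ℤ) - 1), (0, 1, (k : ℤ)), (1, 1, (k : ℤ))} :
          Set (ℤ × ℤ × ℤ)) ↔
      0 ≤ p.1 ∧ 0 ≤ p.2.1 ∧ 0 ≤ p.2.2 ∧
        0 ≤ p.1 + 2 * (k : ℤ) * p.2.1 - 2 * p.2.2 ∧
        0 ≤ 2 * p.2.2 - (2 * (k : ℤ) - 2) * p.2.1 - p.1 :=
  SetLike.ext_iff.1 (DSingularity.closure_generators (by omega)) p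
end

section
/- For every integer k ≥ 2, there is an isomorphism of ℂ-algebras ℂ[x, y, z]/(x² + zy² + z^{2k−1}) ≅ ℂ[Z₁, Z₂, Z₃, W]/(W² − Z₁Z₂Z₃, Z₁ + Z₂ + Z₃^{k−1}). In other words, the D_{2k} singularity {x² + zy² + z^{2k−1} = 0} ⊂ ℂ³ is isomorphic to the intersection of the hypersurfaces {W² − Z₁Z₂Z₃ = 0} and {Z₁ + Z₂ + Z₃^{k−1} = 0} in ℂ⁴. -/
/-!
Given `i² = -1` and `2` invertible, substitute `x = 2iW`, `y = i(Z₁ - Z₂)`, `z = Z₃`. Then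
`x² + zy² + z^{2n+1} = -4W² - Z₃(Z₁ - Z₂)² + Z₃^{2n+1}`, and where `Z₁ + Z₂ = -Z₃ⁿ` the last
term equals `Z₃(Z₁ + Z₂)²`, so the whole expression is `-4(W² - Z₁Z₂Z₃)`. On that hypersurface
`Z₁, Z₂` are recovered from `Z₁ - Z₂ = -iy` and `Z₃ = z`, so the substitution is invertible
modulo the two ideals.
-/

open MvPolynomial

namespace Ideal

variable {R A B : Type*} [CommRing R] [CommRing A] [CommRing B] [Algebra R A] [Algebra R B]
  {I : Ideal A} {J : Ideal B}

def quotientEquivAlgOfInverse (f : A →ₐ[R] B) (g : B →ₐ[R] A)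
    (hf : I ≤ J.comap f) (hg : J ≤ I.comap g)
    (hgf : (Quotient.mkₐ R I).comp (g.comp f) = Quotient.mkₐ R I)
    (hfg : (Quotient.mkₐ R J).comp (f.comp g) = Quotient.mkₐ R J) :
    (A ⧸ I) ≃ₐ[R] B ⧸ J :=
  AlgEquiv.ofAlgHom (quotientMapₐ J f hf) (quotientMapₐ I g hg)
    (Quotient.algHom_ext R (by rw [AlgHom.comp_assoc, quotient_map_comp_mkₐ, ← AlgHom.comp_assoc,
      quotient_map_comp_mkₐ, AlgHom.comp_assoc, hfg, AlgHom.id_comp]))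
    (Quotient.algHom_ext R (by rw [AlgHom.comp_assoc, quotient_map_comp_mkₐ, ← AlgHom.comp_assoc,
      quotient_map_comp_mkₐ, AlgHom.comp_assoc, hgf, AlgHom.id_comp]))

end Ideal

theorem MvPolynomial.mkₐ_comp_eq_of_X_sub_mem {R σ : Type*} [CommRing R]
    {φ : MvPolynomial σ R →ₐ[R] MvPolynomial σ R} {I : Ideal (MvPolynomial σ R)}
    (h : ∀ j, φ (X j) - X j ∈ I) :
    (Ideal.Quotient.mkₐ R I).comp φ = Ideal.Quotient.mkₐ R I :=
  algHom_ext fun j => Ideal.Quotient.eq.mpr (h j)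

theorem MvPolynomial.C_mul_C_eq_neg_one {R σ : Type*} [CommRing R] {i : R} (hi : i * i = -1) :
    (C i : MvPolynomial σ R) * C i = -1 := by
  rw [← C_mul, hi, C_neg, C_1]

theorem MvPolynomial.C_invOf_two_mul_two (σ R : Type*) [CommRing R] [Invertible (2 : R)] :
    (C ⅟2 : MvPolynomial σ R) * 2 = 1 := by
  rw [← map_ofNat C 2, ← C_mul, invOf_mul_self, C_1]

namespace EvenDSingularity

variable {R : Type*} [CommRing R] {i : R} (n : ℕ)

variable (i) in
noncomputable def toCompleteIntersection : MvPolynomial (Fin 3) R →ₐ[R] MvPolynomial (Fin 4) R :=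
  aeval ![2 * C i * X 3, C i * (X 0 - X 1), X 2]

variable (i) in
noncomputable def ofCompleteIntersection [Invertible (2 : R)] :
    MvPolynomial (Fin 4) R →ₐ[R] MvPolynomial (Fin 3) R :=
  aeval ![C ⅟2 * (-(C i * X 1) - X 2 ^ n), C ⅟2 * (C i * X 1 - X 2 ^ n), X 2, -C ⅟2 * C i * X 0]

theorem toCompleteIntersection_apply_equation (hi : i * i = -1) :
    toCompleteIntersection i (X 0 ^ 2 + X 2 * X 1 ^ 2 + X 2 ^ (2 * n + 1)) =
      -4 * (X 3 ^ 2 - X 0 * X 1 * X 2) + X 2 * (X 2 ^ n - X 0 - X 1) * (X 0 + X 1 + X 2 ^ n) := by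
  simp only [toCompleteIntersection, map_add, map_mul, map_pow, aeval_X, Matrix.cons_val]
  linear_combination (4 * X 3 ^ 2 + X 2 * (X 0 - X 1) ^ 2 : MvPolynomial (Fin 4) R) *
    C_mul_C_eq_neg_one hi

variable [Invertible (2 : R)]

theorem ofCompleteIntersection_apply_binomial (hi : i * i = -1) :
    ofCompleteIntersection i n (X 3 ^ 2 - X 0 * X 1 * X 2) =
      -C ⅟2 ^ 2 * (X 0 ^ 2 + X 2 * X 1 ^ 2 + X 2 ^ (2 * n + 1)) := by
  simp only [ofCompleteIntersection, map_sub, map_mul, map_pow, aeval_X, Matrix.cons_val]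
  linear_combination (C ⅟2 ^ 2 * (X 0 ^ 2 + X 2 * X 1 ^ 2) : MvPolynomial (Fin 3) R) *
    C_mul_C_eq_neg_one hi

theorem ofCompleteIntersection_apply_trinomial :
    ofCompleteIntersection i n (X 0 + X 1 + X 2 ^ n) = 0 := by
  simp only [ofCompleteIntersection, map_add, map_pow, aeval_X, Matrix.cons_val]
  linear_combination (-X 2 ^ n : MvPolynomial (Fin 3) R) * C_invOf_two_mul_two (Fin 3) R

theorem ofCompleteIntersection_toCompleteIntersection_X (hi : i * i = -1) (j : Fin 3) :
    ofCompleteIntersection i n (toCompleteIntersection i (X j)) = X j := by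
  simp only [toCompleteIntersection, aeval_X]
  match j with
  | 0 =>
    simp only [ofCompleteIntersection, Matrix.cons_val, map_mul, map_ofNat, aeval_C,
      algebraMap_eq, aeval_X]
    linear_combination (-2 * C ⅟2 * X 0 : MvPolynomial (Fin 3) R) * C_mul_C_eq_neg_one hi
      + (X 0 : MvPolynomial (Fin 3) R) * C_invOf_two_mul_two (Fin 3) R
  | 1 =>
    simp only [ofCompleteIntersection, Matrix.cons_val, map_mul, map_sub, aeval_X, aeval_C,
      algebraMap_eq]
    linear_combination (-2 * C ⅟2 * X 1 : MvPolynomial (Fin 3) R) * C_mul_C_eq_neg_one hi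
      + (X 1 : MvPolynomial (Fin 3) R) * C_invOf_two_mul_two (Fin 3) R
  | 2 => simp only [ofCompleteIntersection, Matrix.cons_val, aeval_X]

theorem toCompleteIntersection_ofCompleteIntersection_X (hi : i * i = -1) (j : Fin 4) :
    toCompleteIntersection i (ofCompleteIntersection i n (X j)) - X j ∈
      Ideal.span {X 0 + X 1 + X 2 ^ n} := by
  simp only [ofCompleteIntersection, aeval_X]
  refine Ideal.mem_span_singleton'.mpr ?_
  match j with
  | 0 =>
    simp only [toCompleteIntersection, Matrix.cons_val, map_mul, map_sub, map_neg, map_pow,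
      aeval_X, aeval_C, algebraMap_eq]
    refine ⟨-C ⅟2, ?_⟩
    linear_combination (C ⅟2 * (X 0 - X 1) : MvPolynomial (Fin 4) R) * C_mul_C_eq_neg_one hi
      - (X 0 : MvPolynomial (Fin 4) R) * C_invOf_two_mul_two (Fin 4) R
  | 1 =>
    simp only [toCompleteIntersection, Matrix.cons_val, map_mul, map_sub, map_pow,
      aeval_X, aeval_C, algebraMap_eq]
    refine ⟨-C ⅟2, ?_⟩
    linear_combination (-C ⅟2 * (X 0 - X 1) : MvPolynomial (Fin 4) R) * C_mul_C_eq_neg_one hi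
      - (X 1 : MvPolynomial (Fin 4) R) * C_invOf_two_mul_two (Fin 4) R
  | 2 =>
    simp only [toCompleteIntersection, Matrix.cons_val, aeval_X]
    exact ⟨0, by ring⟩
  | 3 =>
    simp only [toCompleteIntersection, Matrix.cons_val, map_mul, map_neg, aeval_C, aeval_X,
      algebraMap_eq]
    refine ⟨0, ?_⟩
    linear_combination (2 * C ⅟2 * X 3 : MvPolynomial (Fin 4) R) * C_mul_C_eq_neg_one hi
      - (X 3 : MvPolynomial (Fin 4) R) * C_invOf_two_mul_two (Fin 4) R

noncomputable def quotientAlgEquiv (hi : i * i = -1) :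
    (MvPolynomial (Fin 3) R ⧸
        (Ideal.span {X 0 ^ 2 + X 2 * X 1 ^ 2 + X 2 ^ (2 * n + 1)} : Ideal (MvPolynomial (Fin 3) R)))
      ≃ₐ[R] MvPolynomial (Fin 4) R ⧸
        (Ideal.span {X 3 ^ 2 - X 0 * X 1 * X 2, X 0 + X 1 + X 2 ^ n} :
          Ideal (MvPolynomial (Fin 4) R)) := by
  refine Ideal.quotientEquivAlgOfInverse (toCompleteIntersection i) (ofCompleteIntersection i n)
    ?_ ?_ ?_ ?_
  · rw [Ideal.span_le, Set.singleton_subset_iff, SetLike.mem_coe, Ideal.mem_comap,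
      toCompleteIntersection_apply_equation n hi]
    exact add_mem (Ideal.mul_mem_left _ _ (Ideal.subset_span (Set.mem_insert _ _)))
      (Ideal.mul_mem_left _ _ (Ideal.subset_span (Set.mem_insert_of_mem _ rfl)))
  · rw [Ideal.span_le, Set.insert_subset_iff, Set.singleton_subset_iff, SetLike.mem_coe,
      SetLike.mem_coe, Ideal.mem_comap, Ideal.mem_comap, ofCompleteIntersection_apply_binomial n hi,
      ofCompleteIntersection_apply_trinomial]
    exact ⟨Ideal.mul_mem_left _ _ (Ideal.mem_span_singleton_self _), zero_mem _⟩
  · refine mkₐ_comp_eq_of_X_sub_mem fun j => ?_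
    rw [AlgHom.comp_apply, ofCompleteIntersection_toCompleteIntersection_X n hi, sub_self]
    exact zero_mem _
  · refine mkₐ_comp_eq_of_X_sub_mem fun j => ?_
    refine Ideal.span_mono ?_ (toCompleteIntersection_ofCompleteIntersection_X n hi j)
    exact Set.singleton_subset_iff.mpr (Set.mem_insert_of_mem _ (Set.mem_singleton _))

end EvenDSingularity

/-- the `D_{2k}` singularity `{x² + zy² + z^{2k-1} = 0} ⊂ ℂ³` is isomorphic
to the intersection `{W² - Z₁Z₂Z₃ = 0} ∩ {Z₁ + Z₂ + Z₃^{k-1} = 0} ⊂ ℂ⁴`: their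
coordinate rings are isomorphic as `ℂ`-algebras.  (Here `x, y, z` are `X 0, X 1, X 2`
and `Z₁, Z₂, Z₃, W` are `X 0, X 1, X 2, X 3`.) -/
theorem statement6 (k : ℕ) (hk : 2 ≤ k) :
    Nonempty
      ((MvPolynomial (Fin 3) ℂ ⧸
          (Ideal.span {X 0 ^ 2 + X 2 * X 1 ^ 2 + X 2 ^ (2 * k - 1)} :
            Ideal (MvPolynomial (Fin 3) ℂ)))
        ≃ₐ[ℂ]
      (MvPolynomial (Fin 4) ℂ ⧸
          (Ideal.span {X 3 ^ 2 - X 0 * X 1 * X 2, X 0 + X 1 + X 2 ^ (k - 1)} :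
            Ideal (MvPolynomial (Fin 4) ℂ)))) := by
  obtain ⟨n, rfl⟩ : ∃ n, k = n + 1 := ⟨k - 1, by omega⟩
  rw [show 2 * (n + 1) - 1 = 2 * n + 1 by omega, Nat.add_sub_cancel]
  exact ⟨EvenDSingularity.quotientAlgEquiv n Complex.I_mul_I⟩
end

section
/- For every integer k ≥ 2, the set C = {(a, b, c) ∈ ℤ³ : a ≥ 0, b ≥ 0, c ≥ 0, a + (2k+1)b − 2c ≥ 0, and 2c − (2k−1)b − a ≥ 0} is an additive submonoid of ℤ³, and it is generated as an additive monoid by the six elements (2, 0, 1), (0, 1, k), (0, 2, 2k−1), (0, 2, 2k+1), (1, 1, k), and (1, 1, k+1). -/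
/-!
Write `u = a + (2k+1)b - 2c` and `v = 2c - (2k-1)b - a`, so that `u + v = 2b`. A lattice point of
the cone with `b = 0` is a multiple of `(2,0,1)`. Otherwise one of the generators with positive
`b`-coordinate can be subtracted without leaving the cone: `(0,1,k)` if `u, v > 0`; if `v = 0`,
then `(1,1,k)` or `(0,2,2k-1)` according as `b = 1` or `b ≥ 2`; symmetrically `(1,1,k+1)` or
`(0,2,2k+1)` if `u = 0`. When `b = 1` and `uv = 0`, the coordinate `a` is odd, hence positive.
Induction on `b` finishes the proof.
-/

namespace DCone

def generators (k : ℤ) : Set (ℤ × ℤ × ℤ) :=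
  {(2, 0, 1), (0, 1, k), (0, 2, 2 * k - 1), (0, 2, 2 * k + 1), (1, 1, k), (1, 1, k + 1)}

def cone (k : ℤ) : AddSubmonoid (ℤ × ℤ × ℤ) where
  carrier := {p | 0 ≤ p.1 ∧ 0 ≤ p.2.1 ∧ 0 ≤ p.2.2 ∧ 0 ≤ p.1 + (2 * k + 1) * p.2.1 - 2 * p.2.2 ∧
    0 ≤ 2 * p.2.2 - (2 * k - 1) * p.2.1 - p.1}
  add_mem' := by
    rintro ⟨a, b, c⟩ ⟨a', b', c'⟩ ⟨h₁, h₂, h₃, h₄, h₅⟩ ⟨h₁', h₂', h₃', h₄', h₅'⟩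
    refine ⟨?_, ?_, ?_, ?_, ?_⟩ <;> dsimp only [Prod.mk_add_mk] <;> linarith
  zero_mem' := by simp

variable {k a b c : ℤ}

theorem mem_cone : (a, b, c) ∈ cone k ↔ 0 ≤ a ∧ 0 ≤ b ∧ 0 ≤ c ∧
    0 ≤ a + (2 * k + 1) * b - 2 * c ∧ 0 ≤ 2 * c - (2 * k - 1) * b - a :=
  Iff.rfl

theorem mem_cone_of_nonneg (hk : 1 ≤ k) (ha : 0 ≤ a) (hb : 0 ≤ b)
    (hu : 0 ≤ a + (2 * k + 1) * b - 2 * c) (hv : 0 ≤ 2 * c - (2 * k - 1) * b - a) :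
    (a, b, c) ∈ cone k := by
  have : 0 ≤ (2 * k - 1) * b := mul_nonneg (by linarith) hb
  exact mem_cone.2 ⟨ha, hb, by linarith, hu, hv⟩

theorem generators_subset_cone (hk : 1 ≤ k) : generators k ⊆ cone k := by
  rintro p (rfl | rfl | rfl | rfl | rfl | rfl) <;>
    exact mem_cone_of_nonneg hk (by norm_num) (by norm_num) (by linarith) (by linarith)

theorem mem_closure_generators_of_snd_eq_zero (h : (a, 0, c) ∈ cone k) :
    (a, 0, c) ∈ AddSubmonoid.closure (generators k) := by
  obtain ⟨-, -, hc, hu, hv⟩ := mem_cone.1 h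
  have : (a, 0, c) = c.toNat • ((2, 0, 1) : ℤ × ℤ × ℤ) := by
    simp only [Prod.smul_mk, nsmul_eq_mul, Int.toNat_of_nonneg hc, Prod.mk.injEq]
    omega
  rw [this]
  exact nsmul_mem (AddSubmonoid.subset_closure (Set.mem_insert _ _)) _

theorem exists_generator_sub_mem_cone (hk : 1 ≤ k) (h : (a, b, c) ∈ cone k) (hb : 0 < b) :
    ∃ x y z, (x, y, z) ∈ generators k ∧ (a - x, b - y, c - z) ∈ cone k ∧ 0 < y := by
  obtain ⟨ha, -, -, hu, hv⟩ := mem_cone.1 h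
  by_cases hv₀ : 2 * c - (2 * k - 1) * b - a = 0
  · obtain rfl | hb₂ : b = 1 ∨ 2 ≤ b := by omega
    · have ha₁ : a = 2 * c - 2 * k + 1 := by linarith
      exact ⟨1, 1, k, by simp [generators],
        mem_cone_of_nonneg hk (by omega) le_rfl (by linarith) (by linarith), one_pos⟩
    · exact ⟨0, 2, 2 * k - 1, by simp [generators],
        mem_cone_of_nonneg hk (by linarith) (by linarith) (by linarith) (by linarith), two_pos⟩
  by_cases hu₀ : a + (2 * k + 1) * b - 2 * c = 0
  · obtain rfl | hb₂ : b = 1 ∨ 2 ≤ b := by omega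
    · have ha₁ : a = 2 * c - 2 * k - 1 := by linarith
      exact ⟨1, 1, k + 1, by simp [generators],
        mem_cone_of_nonneg hk (by omega) le_rfl (by linarith) (by linarith), one_pos⟩
    · exact ⟨0, 2, 2 * k + 1, by simp [generators],
        mem_cone_of_nonneg hk (by linarith) (by linarith) (by linarith) (by linarith), two_pos⟩
  have hu₁ : 1 ≤ a + (2 * k + 1) * b - 2 * c := by omega
  have hv₁ : 1 ≤ 2 * c - (2 * k - 1) * b - a := by omega
  exact ⟨0, 1, k, by simp [generators], mem_cone_of_nonneg hk (by linarith) (by linarith)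
    (by linarith) (by linarith), one_pos⟩

theorem closure_generators (hk : 1 ≤ k) : AddSubmonoid.closure (generators k) = cone k := by
  refine le_antisymm (AddSubmonoid.closure_le.2 (generators_subset_cone hk)) ?_
  rintro ⟨a, b, c⟩ hp
  induction hn : b.toNat using Nat.strong_induction_on generalizing a b c with
  | _ n ih =>
  rcases (mem_cone.1 hp).2.1.eq_or_lt with rfl | hb
  · exact mem_closure_generators_of_snd_eq_zero hp
  · obtain ⟨x, y, z, hg, hsub, hy⟩ := exists_generator_sub_mem_cone hk hp hb
    rw [show (a, b, c) = (a - x, b - y, c - z) + (x, y, z) by simp]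
    exact add_mem (ih _ (by omega) _ _ _ hsub rfl) (AddSubmonoid.subset_closure hg)

end DCone

/-- for `k ≥ 2`, the set
`C = {(a,b,c) ∈ ℤ³ : a ≥ 0, b ≥ 0, c ≥ 0, a + (2k+1)b - 2c ≥ 0, 2c - (2k-1)b - a ≥ 0}`
is an additive submonoid of `ℤ³` generated by `(2,0,1)`, `(0,1,k)`, `(0,2,2k-1)`,
`(0,2,2k+1)`, `(1,1,k)` and `(1,1,k+1)`; equivalently, membership in the additive
monoid closure of these six elements is characterised exactly by the defining
inequalities of `C`. -/
theorem statement7 (k : ℕ) (hk : 2 ≤ k) (p : ℤ × ℤ × ℤ) :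
    p ∈ AddSubmonoid.closure
        ({((2 : ℤ), (0 : ℤ), (1 : ℤ)), (0, 1, (k : ℤ)), (0, 2, 2 * (k : ℤ) - 1),
          (0, 2, 2 * (k : ℤ) + 1), (1, 1, (k : ℤ)), (1, 1, (k : ℤ) + 1)} :
          Set (ℤ × ℤ × ℤ)) ↔
      0 ≤ p.1 ∧ 0 ≤ p.2.1 ∧ 0 ≤ p.2.2 ∧
        0 ≤ p.1 + (2 * (k : ℤ) + 1) * p.2.1 - 2 * p.2.2 ∧
        0 ≤ 2 * p.2.2 - (2 * (k : ℤ) - 1) * p.2.1 - p.1 :=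
  SetLike.ext_iff.1 (DCone.closure_generators (k := k) (by omega)) p
end

section
/- Let k ≥ 2 and n = 2k+1. The kernel of the ℂ-algebra homomorphism ℂ[Z₁, Z₂, Z₃, Z₄, Z₅, Z₆] → S = ℂ[x₁, x₂, x_{2k}, y₀, y₁, …, y_{2k}] determined by Z₁ ↦ x_{2k}² y₀² y₁ y₂ ∏_{j=3}^{2k} y_j², Z₂ ↦ x₁ x₂ y₀^{2k−1} y₁^{k} y₂^{k} ∏_{j=3}^{2k} y_j^{2k+1−j}, Z₃ ↦ x₂² x_{2k} y₀^{2k} y₁^{k} y₂^{k+1} ∏_{j=3}^{2k} y_j^{2k+2−j}, Z₄ ↦ x₁² x_{2k} y₀^{2k} y₁^{k+1} y₂^{k} ∏_{j=3}^{2k} y_j^{2k+2−j}, Z₅ ↦ x₂⁴ y₀^{4k−2} y₁^{2k−1} y₂^{2k+1} ∏_{j=3}^{2k} y_j^{4k+2−2j}, Z₆ ↦ x₁⁴ y₀^{4k−2} y₁^{2k+1} y₂^{2k−1} ∏_{j=3}^{2k} y_j^{4k+2−2j} is the ideal generated by the six polynomials Z₂⁴ − Z₅Z₆, Z₁Z₂²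 − Z₃Z₄, Z₂²Z₄ − Z₃Z₆, Z₂²Z₃ − Z₄Z₅, Z₄² − Z₁Z₆, and Z₃² − Z₁Z₅. -/
/-- Weights of the torus action for the `D_n` singularity: the variables of
`S = ℂ[x₁, x₂, x_{n-1}, y₀, y₁, …, y_{n-1}]` are indexed by `Fin (n+3)` with
`0 ↦ x₁`, `1 ↦ x₂`, `2 ↦ x_{n-1}` and `3+m ↦ y_m`; the coordinate `i : Fin n`
corresponds to the basis vector `e_i` of `ℤⁿ`.  Thus `w(x₁) = e₁`, `w(x₂) = e₂`,
`w(x_{n-1}) = e_{n-1}`, `w(y₀) = -2e₀+e₁+e₂+e₃`, `w(y₁) = e₀-2e₁`, `w(y₂) = e₀-2e₂`,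
`w(y₃) = e₀-2e₃+e₄`, `w(y_m) = e_{m-1}-2e_m+e_{m+1}` for `4 ≤ m ≤ n-2` and
`w(y_{n-1}) = e_{n-2}-2e_{n-1}`. -/
def wD (n : ℕ) (v : Fin (n + 3)) (i : Fin n) : ℤ :=
  if (v : ℕ) = 0 then (if (i : ℕ) = 1 then 1 else 0)
  else if (v : ℕ) = 1 then (if (i : ℕ) = 2 then 1 else 0)
  else if (v : ℕ) = 2 then (if (i : ℕ) = n - 1 then 1 else 0)
  else if (v : ℕ) = 3 then
    (if (i : ℕ) = 0 then -2 else if (i : ℕ) = 1 ∨ (i : ℕ) = 2 ∨ (i : ℕ) = 3 then 1 else 0)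
  else if (v : ℕ) = 4 then (if (i : ℕ) = 0 then 1 else if (i : ℕ) = 1 then -2 else 0)
  else if (v : ℕ) = 5 then (if (i : ℕ) = 0 then 1 else if (i : ℕ) = 2 then -2 else 0)
  else if (v : ℕ) = 6 then
    (if (i : ℕ) = 0 then 1 else 0) + (if (i : ℕ) = 3 then -2 else 0)
      + (if (i : ℕ) = 4 then 1 else 0)
  else
    (if (i : ℕ) = (v : ℕ) - 4 then 1 else 0) + (if (i : ℕ) = (v : ℕ) - 3 then -2 else 0)
      + (if (i : ℕ) = (v : ℕ) - 2 then 1 else 0)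

/-- The variable of index `a` in `S = ℂ[x₁, x₂, x_{n-1}, y₀, y₁, …, y_{n-1}]`
(indices as in `wD`: `0 ↦ x₁`, `1 ↦ x₂`, `2 ↦ x_{n-1}`, `3+m ↦ y_m`). -/
noncomputable def vD (n : ℕ) (a : ℕ) : MvPolynomial (Fin (n + 3)) ℂ :=
  MvPolynomial.X ⟨a % (n + 3), Nat.mod_lt a (by omega)⟩

/-- The invariant monomial `Z₁ = x_{2k}² y₀² y₁ y₂ ∏_{j=3}^{2k} y_j²`. -/
noncomputable def OZ₁ (k : ℕ) : MvPolynomial (Fin (2 * k + 1 + 3)) ℂ :=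
  vD (2 * k + 1) 2 ^ 2 * vD (2 * k + 1) 3 ^ 2 * vD (2 * k + 1) 4 * vD (2 * k + 1) 5 *
    ∏ j ∈ Finset.Icc 3 (2 * k), vD (2 * k + 1) (j + 3) ^ 2

/-- The invariant monomial `Z₂ = x₁ x₂ y₀^{2k-1} y₁^k y₂^k ∏_{j=3}^{2k} y_j^{2k+1-j}`. -/
noncomputable def OZ₂ (k : ℕ) : MvPolynomial (Fin (2 * k + 1 + 3)) ℂ :=
  vD (2 * k + 1) 0 * vD (2 * k + 1) 1 * vD (2 * k + 1) 3 ^ (2 * k - 1) *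
      vD (2 * k + 1) 4 ^ k * vD (2 * k + 1) 5 ^ k *
    ∏ j ∈ Finset.Icc 3 (2 * k), vD (2 * k + 1) (j + 3) ^ (2 * k + 1 - j)

/-- The invariant monomial `Z₃ = x₂² x_{2k} y₀^{2k} y₁^k y₂^{k+1} ∏_{j=3}^{2k} y_j^{2k+2-j}`. -/
noncomputable def OZ₃ (k : ℕ) : MvPolynomial (Fin (2 * k + 1 + 3)) ℂ :=
  vD (2 * k + 1) 1 ^ 2 * vD (2 * k + 1) 2 * vD (2 * k + 1) 3 ^ (2 * k) *
      vD (2 * k + 1) 4 ^ k * vD (2 * k + 1) 5 ^ (k + 1) *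
    ∏ j ∈ Finset.Icc 3 (2 * k), vD (2 * k + 1) (j + 3) ^ (2 * k + 2 - j)

/-- The invariant monomial `Z₄ = x₁² x_{2k} y₀^{2k} y₁^{k+1} y₂^k ∏_{j=3}^{2k} y_j^{2k+2-j}`. -/
noncomputable def OZ₄ (k : ℕ) : MvPolynomial (Fin (2 * k + 1 + 3)) ℂ :=
  vD (2 * k + 1) 0 ^ 2 * vD (2 * k + 1) 2 * vD (2 * k + 1) 3 ^ (2 * k) *
      vD (2 * k + 1) 4 ^ (k + 1) * vD (2 * k + 1) 5 ^ k *
    ∏ j ∈ Finset.Icc 3 (2 * k), vD (2 * k + 1) (j + 3) ^ (2 * k + 2 - j)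

/-- The invariant monomial `Z₅ = x₂⁴ y₀^{4k-2} y₁^{2k-1} y₂^{2k+1} ∏_{j=3}^{2k} y_j^{4k+2-2j}`. -/
noncomputable def OZ₅ (k : ℕ) : MvPolynomial (Fin (2 * k + 1 + 3)) ℂ :=
  vD (2 * k + 1) 1 ^ 4 * vD (2 * k + 1) 3 ^ (4 * k - 2) * vD (2 * k + 1) 4 ^ (2 * k - 1) *
      vD (2 * k + 1) 5 ^ (2 * k + 1) *
    ∏ j ∈ Finset.Icc 3 (2 * k), vD (2 * k + 1) (j + 3) ^ (4 * k + 2 - 2 * j)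

/-- The invariant monomial `Z₆ = x₁⁴ y₀^{4k-2} y₁^{2k+1} y₂^{2k-1} ∏_{j=3}^{2k} y_j^{4k+2-2j}`. -/
noncomputable def OZ₆ (k : ℕ) : MvPolynomial (Fin (2 * k + 1 + 3)) ℂ :=
  vD (2 * k + 1) 0 ^ 4 * vD (2 * k + 1) 3 ^ (4 * k - 2) * vD (2 * k + 1) 4 ^ (2 * k + 1) *
      vD (2 * k + 1) 5 ^ (2 * k - 1) *
    ∏ j ∈ Finset.Icc 3 (2 * k), vD (2 * k + 1) (j + 3) ^ (4 * k + 2 - 2 * j)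

/-!
Each invariant factors as `Zᵢ = mᵢ · W ^ dᵢ` with `(dᵢ) = (0, 1, 1, 1, 2, 2)`, where `mᵢ` is a
monomial in `x₁, x₂, x_{2k}, y₀, y₁, y₂, ∏_{j ≥ 3} y_j` of bounded degree and
`W = y₀^{2k-1} y₁^{k-1} y₂^{k-1} ∏_{j ≥ 3} y_j^{2k+1-j}`; in this form the six binomials visibly
lie in the kernel.

Conversely, setting every `y` to `1` turns the map into the monomial map
`Z ↦ (x_{2k}², x₁x₂, x₂²x_{2k}, x₁²x_{2k}, x₂⁴, x₁⁴)`, whose kernel is already contained in the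
ideal of binomials. Modulo the binomials, every monomial `Z₁^{a₀} ⋯ Z₆^{a₅}` is congruent to
one with `a₂ + a₃ ≤ 1` and `a₁ + 2(a₂ + a₃) ≤ 3`, and on these the exponent of `x₁, x₂, x_{2k}`,
namely `(a₁ + 2a₃ + 4a₅, a₁ + 2a₂ + 4a₄, 2a₀ + a₂ + a₃)`, determines `a`. So a polynomial in the
kernel is congruent to a combination of reduced monomials; their images are distinct monomials,
so all its coefficients vanish.
-/

namespace MvPolynomial

variable {R σ τ : Type*} [CommRing R]

theorem monomial_one_eq_prod_X_pow [Fintype σ] (u : σ →₀ ℕ) :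
    monomial u (1 : R) = ∏ i, X i ^ u i := by
  rw [monomial_eq, C_1, one_mul, Finsupp.prod_fintype _ _ fun _ => pow_zero _]

theorem algHom_apply_eq_mapDomain {φ : MvPolynomial σ R →ₐ[R] MvPolynomial τ R}
    {e : (σ →₀ ℕ) → (τ →₀ ℕ)} (he : ∀ u, φ (monomial u 1) = monomial (e u) 1)
    (p : MvPolynomial σ R) : φ p = AddMonoidAlgebra.mapDomain e p := by
  induction p using MvPolynomial.induction_on' with
  | monomial u a =>
    have hφ : φ (monomial u a) = monomial (e u) a := by
      rw [← mul_one a, ← C_mul_monomial, map_mul, he, algHom_C, algebraMap_eq, C_mul_monomial]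
    rw [hφ, ← single_eq_monomial, ← single_eq_monomial, AddMonoidAlgebra.mapDomain_single]
  | add p q hp hq => rw [map_add, hp, hq, AddMonoidAlgebra.mapDomain_add]

theorem ker_le_of_exists_normalForm {φ : MvPolynomial σ R →ₐ[R] MvPolynomial τ R}
    {I : Ideal (MvPolynomial σ R)} {e : (σ →₀ ℕ) → (τ →₀ ℕ)} {N : Set (σ →₀ ℕ)}
    (he : ∀ u, φ (monomial u 1) = monomial (e u) 1) (hN : Set.InjOn e N)
    (hI : I ≤ RingHom.ker φ) (hnf : ∀ u, ∃ v ∈ N, monomial u 1 - monomial v 1 ∈ I) :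
    RingHom.ker φ ≤ I := by
  classical
  choose nf hnfN hnfI using hnf
  intro p hp
  set q : MvPolynomial σ R := ∑ u ∈ p.support, monomial (nf u) (coeff u p)
  have hpq : p - q ∈ I := by
    nth_rw 1 [← support_sum_monomial_coeff p]
    rw [← Finset.sum_sub_distrib]
    refine Ideal.sum_mem _ fun u _ => ?_
    rw [← mul_one (coeff u p), ← C_mul_monomial, ← C_mul_monomial, ← mul_sub]
    exact I.mul_mem_left _ (hnfI u)
  have hq : φ q = 0 := by
    rw [← sub_sub_cancel p q, map_sub, hI hpq, RingHom.mem_ker.mp hp, sub_zero]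
  have hqN : (q.support : Set (σ →₀ ℕ)) ⊆ N := by
    intro w hw
    obtain ⟨u, -, hu⟩ := Finset.mem_biUnion.mp (support_sum (Finset.mem_coe.mp hw))
    rw [Finset.mem_singleton.mp (support_monomial_subset hu)]
    exact hnfN u
  have hmap : AddMonoidAlgebra.mapDomain e q = AddMonoidAlgebra.mapDomain e 0 := by
    rw [← algHom_apply_eq_mapDomain he, hq, AddMonoidAlgebra.mapDomain_zero]
  have hq0 : q = 0 := AddMonoidAlgebra.coeff_injective <|
    Finsupp.mapDomain_injOn N hN hqN (by simp) (congrArg AddMonoidAlgebra.coeff hmap)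
  simpa [hq0] using hpq

end MvPolynomial

namespace DSingularity

open MvPolynomial

section Reduction

variable {A : Type*} [CommRing A] {z₀ z₁ z₂ z₃ z₄ z₅ : A}

theorem exists_reduction_step (h₁ : z₁ ^ 4 = z₄ * z₅) (h₂ : z₀ * z₁ ^ 2 = z₂ * z₃)
    (h₃ : z₁ ^ 2 * z₃ = z₂ * z₅) (h₄ : z₁ ^ 2 * z₂ = z₃ * z₄) (h₅ : z₃ ^ 2 = z₀ * z₅)
    (h₆ : z₂ ^ 2 = z₀ * z₄) {a₀ a₁ a₂ a₃ a₄ a₅ : ℕ}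
    (ha : ¬ (a₂ + a₃ ≤ 1 ∧ a₁ + 2 * (a₂ + a₃) ≤ 3)) :
    ∃ b₀ b₁ b₂ b₃ b₄ b₅ : ℕ, 4 * (b₂ + b₃) + b₁ < 4 * (a₂ + a₃) + a₁ ∧
      z₀ ^ a₀ * z₁ ^ a₁ * z₂ ^ a₂ * z₃ ^ a₃ * z₄ ^ a₄ * z₅ ^ a₅ =
        z₀ ^ b₀ * z₁ ^ b₁ * z₂ ^ b₂ * z₃ ^ b₃ * z₄ ^ b₄ * z₅ ^ b₅ := by
  by_cases h22 : 2 ≤ a₂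
  · obtain ⟨m, rfl⟩ := Nat.exists_eq_add_of_le' h22
    exact ⟨a₀ + 1, a₁, m, a₃, a₄ + 1, a₅, by omega,
      by linear_combination z₀ ^ a₀ * z₁ ^ a₁ * z₂ ^ m * z₃ ^ a₃ * z₄ ^ a₄ * z₅ ^ a₅ * h₆⟩
  by_cases h33 : 2 ≤ a₃
  · obtain ⟨m, rfl⟩ := Nat.exists_eq_add_of_le' h33
    exact ⟨a₀ + 1, a₁, a₂, m, a₄, a₅ + 1, by omega,
      by linear_combination z₀ ^ a₀ * z₁ ^ a₁ * z₂ ^ a₂ * z₃ ^ m * z₄ ^ a₄ * z₅ ^ a₅ * h₅⟩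
  by_cases h23 : a₂ = 1 ∧ a₃ = 1
  · obtain ⟨rfl, rfl⟩ := h23
    exact ⟨a₀ + 1, a₁ + 2, 0, 0, a₄, a₅, by omega,
      by linear_combination -(z₀ ^ a₀ * z₁ ^ a₁ * z₄ ^ a₄ * z₅ ^ a₅) * h₂⟩
  obtain ⟨m, rfl⟩ : ∃ m, a₁ = m + 2 := ⟨a₁ - 2, by omega⟩
  rcases (by omega : (a₂ = 0 ∧ a₃ = 0) ∨ (a₂ = 1 ∧ a₃ = 0) ∨ (a₂ = 0 ∧ a₃ = 1)) with
    ⟨rfl, rfl⟩ | ⟨rfl, rfl⟩ | ⟨rfl, rfl⟩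
  · obtain ⟨l, rfl⟩ : ∃ l, m = l + 2 := ⟨m - 2, by omega⟩
    exact ⟨a₀, l, 0, 0, a₄ + 1, a₅ + 1, by omega,
      by linear_combination z₀ ^ a₀ * z₁ ^ l * z₄ ^ a₄ * z₅ ^ a₅ * h₁⟩
  · exact ⟨a₀, m, 0, 1, a₄ + 1, a₅, by omega,
      by linear_combination z₀ ^ a₀ * z₁ ^ m * z₄ ^ a₄ * z₅ ^ a₅ * h₄⟩
  · exact ⟨a₀, m, 1, 0, a₄, a₅ + 1, by omega,
      by linear_combination z₀ ^ a₀ * z₁ ^ m * z₄ ^ a₄ * z₅ ^ a₅ * h₃⟩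

theorem exists_reduced_monomial (h₁ : z₁ ^ 4 = z₄ * z₅) (h₂ : z₀ * z₁ ^ 2 = z₂ * z₃)
    (h₃ : z₁ ^ 2 * z₃ = z₂ * z₅) (h₄ : z₁ ^ 2 * z₂ = z₃ * z₄) (h₅ : z₃ ^ 2 = z₀ * z₅)
    (h₆ : z₂ ^ 2 = z₀ * z₄) (a₀ a₁ a₂ a₃ a₄ a₅ : ℕ) :
    ∃ b₀ b₁ b₂ b₃ b₄ b₅ : ℕ, (b₂ + b₃ ≤ 1 ∧ b₁ + 2 * (b₂ + b₃) ≤ 3) ∧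
      z₀ ^ a₀ * z₁ ^ a₁ * z₂ ^ a₂ * z₃ ^ a₃ * z₄ ^ a₄ * z₅ ^ a₅ =
        z₀ ^ b₀ * z₁ ^ b₁ * z₂ ^ b₂ * z₃ ^ b₃ * z₄ ^ b₄ * z₅ ^ b₅ := by
  induction hN : 4 * (a₂ + a₃) + a₁ using Nat.strong_induction_on
    generalizing a₀ a₁ a₂ a₃ a₄ a₅ with
  | _ N ih =>
    by_cases ha : a₂ + a₃ ≤ 1 ∧ a₁ + 2 * (a₂ + a₃) ≤ 3
    · exact ⟨a₀, a₁, a₂, a₃, a₄, a₅, ha, rfl⟩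
    obtain ⟨b₀, b₁, b₂, b₃, b₄, b₅, hlt, hab⟩ := exists_reduction_step h₁ h₂ h₃ h₄ h₅ h₆ ha
    obtain ⟨c₀, c₁, c₂, c₃, c₄, c₅, hc, hbc⟩ := ih _ (hN ▸ hlt) b₀ b₁ b₂ b₃ b₄ b₅ rfl
    exact ⟨c₀, c₁, c₂, c₃, c₄, c₅, hc, hab.trans hbc⟩

end Reduction

section XPart

variable (R : Type*) [CommRing R]

noncomputable def relationIdeal : Ideal (MvPolynomial (Fin 6) R) :=
  Ideal.span
    {X 1 ^ 4 - X 4 * X 5, X 0 * X 1 ^ 2 - X 2 * X 3, X 1 ^ 2 * X 3 - X 2 * X 5,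
      X 1 ^ 2 * X 2 - X 3 * X 4, X 3 ^ 2 - X 0 * X 5, X 2 ^ 2 - X 0 * X 4}

/-- The invariants with every `y` set to `1`; `X 0, X 1, X 2` stand for `x₁, x₂, x_{2k}`. -/
noncomputable def xPart : MvPolynomial (Fin 6) R →ₐ[R] MvPolynomial (Fin 3) R :=
  aeval ![X 2 ^ 2, X 0 * X 1, X 1 ^ 2 * X 2, X 0 ^ 2 * X 2, X 1 ^ 4, X 0 ^ 4]

noncomputable def xPartExponent (u : Fin 6 →₀ ℕ) : Fin 3 →₀ ℕ :=
  Finsupp.equivFunOnFinite.symm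
    ![u 1 + 2 * u 3 + 4 * u 5, u 1 + 2 * u 2 + 4 * u 4, 2 * u 0 + u 2 + u 3]

def reducedExponents : Set (Fin 6 →₀ ℕ) :=
  {w | w 2 + w 3 ≤ 1 ∧ w 1 + 2 * (w 2 + w 3) ≤ 3}

variable {R}

theorem xPart_monomial (u : Fin 6 →₀ ℕ) :
    xPart R (monomial u 1) = monomial (xPartExponent u) 1 := by
  simp only [monomial_one_eq_prod_X_pow, Fin.prod_univ_six, Fin.prod_univ_three, map_mul, map_pow,
    xPart, aeval_X, xPartExponent, Finsupp.coe_equivFunOnFinite_symm, Matrix.cons_val]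
  ring

theorem injOn_xPartExponent : Set.InjOn xPartExponent reducedExponents := by
  rintro u ⟨hu₁, hu₂⟩ v ⟨hv₁, hv₂⟩ huv
  have h₀ := DFunLike.congr_fun huv 0
  have h₁ := DFunLike.congr_fun huv 1
  have h₂ := DFunLike.congr_fun huv 2
  simp only [xPartExponent, Finsupp.coe_equivFunOnFinite_symm, Matrix.cons_val] at h₀ h₁ h₂
  ext i
  fin_cases i <;> dsimp <;> omega

theorem relationIdeal_le_ker_xPart : relationIdeal R ≤ RingHom.ker (xPart R) := by
  rw [relationIdeal, Ideal.span_le]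
  rintro g (rfl | rfl | rfl | rfl | rfl | rfl) <;>
  · simp only [SetLike.mem_coe, RingHom.mem_ker, map_sub, map_mul, map_pow, xPart, aeval_X,
      Matrix.cons_val]
    ring

theorem exists_reduced_monomial_sub_mem (u : Fin 6 →₀ ℕ) :
    ∃ v ∈ reducedExponents, monomial u (1 : R) - monomial v 1 ∈ relationIdeal R := by
  set z : Fin 6 → MvPolynomial (Fin 6) R ⧸ relationIdeal R := fun i => Ideal.Quotient.mk _ (X i)
  have relations : z 1 ^ 4 = z 4 * z 5 ∧ z 0 * z 1 ^ 2 = z 2 * z 3 ∧ z 1 ^ 2 * z 3 = z 2 * z 5 ∧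
      z 1 ^ 2 * z 2 = z 3 * z 4 ∧ z 3 ^ 2 = z 0 * z 5 ∧ z 2 ^ 2 = z 0 * z 4 := by
    refine ⟨?_, ?_, ?_, ?_, ?_, ?_⟩ <;>
    · simp only [z, ← map_pow, ← map_mul]
      exact Ideal.Quotient.eq.mpr (Ideal.subset_span (by simp))
  obtain ⟨h₁, h₂, h₃, h₄, h₅, h₆⟩ := relations
  obtain ⟨b₀, b₁, b₂, b₃, b₄, b₅, hb, hab⟩ :=
    exists_reduced_monomial h₁ h₂ h₃ h₄ h₅ h₆ (u 0) (u 1) (u 2) (u 3) (u 4) (u 5)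
  refine ⟨Finsupp.equivFunOnFinite.symm ![b₀, b₁, b₂, b₃, b₄, b₅], hb, Ideal.Quotient.eq.mp ?_⟩
  simpa [monomial_one_eq_prod_X_pow, Fin.prod_univ_six, z] using hab

theorem ker_xPart : RingHom.ker (xPart R) = relationIdeal R :=
  le_antisymm
    (ker_le_of_exists_normalForm xPart_monomial injOn_xPartExponent relationIdeal_le_ker_xPart
      exists_reduced_monomial_sub_mem)
    relationIdeal_le_ker_xPart

end XPart

section Invariants

open Finset

variable (k : ℕ)

noncomputable def yTail : MvPolynomial (Fin (2 * k + 1 + 3)) ℂ :=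
  ∏ j ∈ Icc 3 (2 * k), vD (2 * k + 1) (j + 3)

noncomputable def yTailWeighted : MvPolynomial (Fin (2 * k + 1 + 3)) ℂ :=
  ∏ j ∈ Icc 3 (2 * k), vD (2 * k + 1) (j + 3) ^ (2 * k + 1 - j)

noncomputable def commonFactor : MvPolynomial (Fin (2 * k + 1 + 3)) ℂ :=
  vD (2 * k + 1) 3 ^ (2 * k - 1) * vD (2 * k + 1) 4 ^ (k - 1) * vD (2 * k + 1) 5 ^ (k - 1) *
    yTailWeighted k

theorem prod_tail_pow_two :
    ∏ j ∈ Icc 3 (2 * k), vD (2 * k + 1) (j + 3) ^ 2 = yTail k ^ 2 :=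
  prod_pow _ _ _

theorem prod_tail_pow_succ :
    ∏ j ∈ Icc 3 (2 * k), vD (2 * k + 1) (j + 3) ^ (2 * k + 2 - j) =
      yTailWeighted k * yTail k := by
  rw [yTailWeighted, yTail, ← prod_mul_distrib]
  refine prod_congr rfl fun j hj => ?_
  rw [← pow_succ, show 2 * k + 2 - j = 2 * k + 1 - j + 1 by grind]

theorem prod_tail_pow_double :
    ∏ j ∈ Icc 3 (2 * k), vD (2 * k + 1) (j + 3) ^ (4 * k + 2 - 2 * j) = yTailWeighted k ^ 2 := by
  rw [yTailWeighted, ← prod_pow]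
  refine prod_congr rfl fun j _ => ?_
  rw [← pow_mul, show 4 * k + 2 - 2 * j = (2 * k + 1 - j) * 2 by omega]

local notation "x₁" => vD (2 * k + 1) 0
local notation "x₂" => vD (2 * k + 1) 1
local notation "x₂ₖ" => vD (2 * k + 1) 2
local notation "y₀" => vD (2 * k + 1) 3
local notation "y₁" => vD (2 * k + 1) 4
local notation "y₂" => vD (2 * k + 1) 5

variable {k}

theorem OZ₁_eq : OZ₁ k = x₂ₖ ^ 2 * y₀ ^ 2 * y₁ * y₂ * yTail k ^ 2 := by
  rw [OZ₁, prod_tail_pow_two]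

theorem OZ₂_eq (hk : 1 ≤ k) : OZ₂ k = x₁ * x₂ * y₁ * y₂ * commonFactor k := by
  obtain ⟨m, rfl⟩ := Nat.exists_eq_add_of_le' hk
  rw [OZ₂, commonFactor, yTailWeighted, show 2 * (m + 1) - 1 = 2 * m + 1 by omega,
    Nat.add_sub_cancel]
  ring

theorem OZ₃_eq (hk : 1 ≤ k) :
    OZ₃ k = x₂ ^ 2 * x₂ₖ * y₀ * y₁ * y₂ ^ 2 * yTail k * commonFactor k := by
  obtain ⟨m, rfl⟩ := Nat.exists_eq_add_of_le' hk
  rw [OZ₃, commonFactor, prod_tail_pow_succ, show 2 * (m + 1) - 1 = 2 * m + 1 by omega,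
    Nat.add_sub_cancel]
  ring

theorem OZ₄_eq (hk : 1 ≤ k) :
    OZ₄ k = x₁ ^ 2 * x₂ₖ * y₀ * y₁ ^ 2 * y₂ * yTail k * commonFactor k := by
  obtain ⟨m, rfl⟩ := Nat.exists_eq_add_of_le' hk
  rw [OZ₄, commonFactor, prod_tail_pow_succ, show 2 * (m + 1) - 1 = 2 * m + 1 by omega,
    Nat.add_sub_cancel]
  ring

theorem OZ₅_eq (hk : 1 ≤ k) : OZ₅ k = x₂ ^ 4 * y₁ * y₂ ^ 3 * commonFactor k ^ 2 := by
  obtain ⟨m, rfl⟩ := Nat.exists_eq_add_of_le' hk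
  rw [OZ₅, commonFactor, prod_tail_pow_double, show 2 * (m + 1) - 1 = 2 * m + 1 by omega,
    show 4 * (m + 1) - 2 = 4 * m + 2 by omega, Nat.add_sub_cancel]
  ring

theorem OZ₆_eq (hk : 1 ≤ k) : OZ₆ k = x₁ ^ 4 * y₁ ^ 3 * y₂ * commonFactor k ^ 2 := by
  obtain ⟨m, rfl⟩ := Nat.exists_eq_add_of_le' hk
  rw [OZ₆, commonFactor, prod_tail_pow_double, show 2 * (m + 1) - 1 = 2 * m + 1 by omega,
    show 4 * (m + 1) - 2 = 4 * m + 2 by omega, Nat.add_sub_cancel]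
  ring

theorem relationIdeal_le_ker (hk : 1 ≤ k) :
    relationIdeal ℂ ≤ RingHom.ker (aeval ![OZ₁ k, OZ₂ k, OZ₃ k, OZ₄ k, OZ₅ k, OZ₆ k]) := by
  rw [relationIdeal, Ideal.span_le]
  rintro g (rfl | rfl | rfl | rfl | rfl | rfl) <;>
  · simp only [SetLike.mem_coe, RingHom.mem_ker, map_sub, map_mul, map_pow, aeval_X,
      Matrix.cons_val, OZ₁_eq, OZ₂_eq hk, OZ₃_eq hk, OZ₄_eq hk, OZ₅_eq hk, OZ₆_eq hk]
    ring

noncomputable def evalYOne :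
    MvPolynomial (Fin (2 * k + 1 + 3)) ℂ →ₐ[ℂ] MvPolynomial (Fin 3) ℂ :=
  aeval fun v => if h : (v : ℕ) < 3 then X ⟨v, h⟩ else 1

theorem evalYOne_vD {a : ℕ} (ha : a < 2 * k + 1 + 3) :
    evalYOne (vD (2 * k + 1) a) = if h : a < 3 then X ⟨a, h⟩ else 1 := by
  rw [evalYOne, vD, aeval_X]
  simp only [Nat.mod_eq_of_lt ha]

theorem evalYOne_vD_eq_one {a : ℕ} (ha₃ : 3 ≤ a) (ha : a < 2 * k + 1 + 3) :
    evalYOne (vD (2 * k + 1) a) = 1 := by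
  rw [evalYOne_vD ha, dif_neg (by omega)]

theorem evalYOne_x₁ : evalYOne x₁ = X 0 := by rw [evalYOne_vD (by omega)]; rfl
theorem evalYOne_x₂ : evalYOne x₂ = X 1 := by rw [evalYOne_vD (by omega)]; rfl
theorem evalYOne_x₂ₖ : evalYOne x₂ₖ = X 2 := by rw [evalYOne_vD (by omega)]; rfl
theorem evalYOne_y₀ : evalYOne y₀ = 1 := by rw [evalYOne_vD (by omega)]; rfl
theorem evalYOne_y₁ (hk : 1 ≤ k) : evalYOne y₁ = 1 := by rw [evalYOne_vD (by omega)]; rfl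
theorem evalYOne_y₂ (hk : 1 ≤ k) : evalYOne y₂ = 1 := by rw [evalYOne_vD (by omega)]; rfl

theorem evalYOne_yTail : evalYOne (yTail k) = 1 := by
  rw [yTail, map_prod]
  exact prod_eq_one fun j hj => evalYOne_vD_eq_one (by omega) (by grind)

theorem evalYOne_commonFactor (hk : 1 ≤ k) : evalYOne (commonFactor k) = 1 := by
  have hT : evalYOne (yTailWeighted k) = 1 := by
    rw [yTailWeighted, map_prod]
    exact prod_eq_one fun j hj => by
      rw [map_pow, evalYOne_vD_eq_one (by omega) (by grind), one_pow]
  simp only [commonFactor, map_mul, map_pow, hT, evalYOne_y₀, evalYOne_y₁ hk, evalYOne_y₂ hk,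
    one_pow, mul_one]

theorem evalYOne_comp_aeval (hk : 1 ≤ k) :
    evalYOne.comp (aeval ![OZ₁ k, OZ₂ k, OZ₃ k, OZ₄ k, OZ₅ k, OZ₆ k]) = xPart ℂ := by
  refine algHom_ext fun i => ?_
  fin_cases i <;>
  · simp [xPart, OZ₁_eq, OZ₂_eq hk, OZ₃_eq hk, OZ₄_eq hk, OZ₅_eq hk, OZ₆_eq hk, evalYOne_x₁,
      evalYOne_x₂, evalYOne_x₂ₖ, evalYOne_y₀, evalYOne_y₁ hk, evalYOne_y₂ hk, evalYOne_yTail,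
      evalYOne_commonFactor hk]

end Invariants

end DSingularity

open MvPolynomial in
/-- for `n = 2k+1` (`k ≥ 2`), the kernel of the `ℂ`-algebra map
`ℂ[Z₁,…,Z₆] → S` sending the variables to the six invariant monomials is the ideal
generated by `Z₂⁴ - Z₅Z₆`, `Z₁Z₂² - Z₃Z₄`, `Z₂²Z₄ - Z₃Z₆`, `Z₂²Z₃ - Z₄Z₅`,
`Z₄² - Z₁Z₆` and `Z₃² - Z₁Z₅`. -/
theorem statement9 (k : ℕ) (hk : 2 ≤ k) :
    RingHom.ker
        (MvPolynomial.aeval ![OZ₁ k, OZ₂ k, OZ₃ k, OZ₄ k, OZ₅ k, OZ₆ k] :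
          MvPolynomial (Fin 6) ℂ →ₐ[ℂ] MvPolynomial (Fin (2 * k + 1 + 3)) ℂ)
      = (Ideal.span
          {X 1 ^ 4 - X 4 * X 5, X 0 * X 1 ^ 2 - X 2 * X 3, X 1 ^ 2 * X 3 - X 2 * X 5,
            X 1 ^ 2 * X 2 - X 3 * X 4, X 3 ^ 2 - X 0 * X 5, X 2 ^ 2 - X 0 * X 4} :
          Ideal (MvPolynomial (Fin 6) ℂ)) := by
  have hk₁ : 1 ≤ k := by omega
  refine le_antisymm ?_ (DSingularity.relationIdeal_le_ker hk₁)
  calc _ ≤ (RingHom.ker DSingularity.evalYOne).comap _ := Ideal.ker_le_comap _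
    _ = RingHom.ker (DSingularity.xPart ℂ) := by
      rw [AlgHom.comap_ker, DSingularity.evalYOne_comp_aeval hk₁]
    _ = _ := DSingularity.ker_xPart
end

section
/- Let n ≥ 4 and let M be the n×n integer matrix with rows and columns indexed by {0, 1, …, n−1} given by M_{ii} = −2 for all i; M_{01} = M_{10} = M_{02} = M_{20} = M_{03} = M_{30} = 1; M_{i,i+1} = M_{i+1,i} = 1 for 3 ≤ i ≤ n−2; and all other entries 0 (the intersection matrix of the D_n exceptional configuration). Order the indices linearly by 1 ≺ 2 ≺ 0 ≺ 3 ≺ 4 ≺ ⋯ ≺ n−1. Then for every d ∈ ℤⁿ the following procedure terminates in finitely many steps: while d has a negative coordinate, let i be the ≺-least index with d_i < 0 and replace d by d − M·e_i (where e_i is the i-th standard basis vector). Equivalently, there is no infinite sequence d⁰ = d, d^{m+1} = d^m − M·e_{i_m} in which every d^m has a negative coordinate and i_m is the ≺-least index with (d^m)_{i_m} < 0; the procedure always reaches a vector with all coordinates nonnegative. -/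
/-!
Let `x m` count how often each index has been fired in the first `m` steps, so that
`d m = d 0 - M *ᵥ x m`. Firing at `i` raises `S m = -(x m ⬝ᵥ M *ᵥ x m)` by
`2 (d m i - d 0 i) - M i i`, which is bounded above because `d m i < 0`; hence `S m` grows at
most linearly in `m`. For `D_n`, `-M` is positive definite:
`-2 yᵀ M y = (y₀ - 2y₁)² + (y₀ - 2y₂)² + 2(y₀ - y₃)² + 2 ∑_{a ≥ 3} (y_{a+1} - y_a)²` with `y_n = 0`,
and telescoping along the long arm gives `‖y‖² ≤ 2n(n+1) · (-yᵀ M y)`. So `S m` also dominates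
`‖x m‖² ≥ m² / n`, which is impossible for large `m`.
-/

open Finset Matrix

section Firing

variable {ι : Type*} [DecidableEq ι]

def firingCount (idx : ℕ → ι) (m : ℕ) : ι → ℤ := ∑ t ∈ range m, Pi.single (idx t) 1

theorem firingCount_succ (idx : ℕ → ι) (m : ℕ) :
    firingCount idx (m + 1) = firingCount idx m + Pi.single (idx m) 1 :=
  sum_range_succ _ _

variable [Fintype ι]

theorem sum_firingCount (idx : ℕ → ι) (m : ℕ) : ∑ j, firingCount idx m j = m := by
  induction m with
  | zero => simp [firingCount]
  | succ m ih => simp [firingCount_succ, sum_add_distrib, ih]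

theorem neg_dotProduct_mulVec_add_single {M : Matrix ι ι ℤ} (hM : M.IsSymm) (x : ι → ℤ) (i : ι) :
    -((x + Pi.single i 1) ⬝ᵥ M *ᵥ (x + Pi.single i 1)) =
      -(x ⬝ᵥ M *ᵥ x) - 2 * (M *ᵥ x) i - M i i := by
  have hsymm : Pi.single i 1 ⬝ᵥ M *ᵥ x = x ⬝ᵥ M *ᵥ Pi.single i 1 := by
    rw [dotProduct_mulVec, dotProduct_comm, ← vecMul_transpose, hM.eq]
  rw [mulVec_add, add_dotProduct, dotProduct_add, dotProduct_add, ← hsymm, single_dotProduct,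
    single_dotProduct, mulVec_single_one]
  simp only [col_apply]
  ring

variable {M : Matrix ι ι ℤ} {d : ℕ → ι → ℤ} {idx : ℕ → ι}

theorem eq_sub_mulVec_firingCount (hstep : ∀ m, d (m + 1) = fun j => d m j - M j (idx m))
    (m : ℕ) : d m = d 0 - M *ᵥ firingCount idx m := by
  induction m with
  | zero => simp [firingCount]
  | succ m ih =>
    rw [hstep, ih, firingCount_succ, mulVec_add, mulVec_single_one]
    ext j
    simp only [Pi.sub_apply, Pi.add_apply, col_apply]
    ring

theorem neg_dotProduct_mulVec_firingCount_le (hM : M.IsSymm) (hneg : ∀ m, d m (idx m) < 0)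
    (hstep : ∀ m, d (m + 1) = fun j => d m j - M j (idx m)) (m : ℕ) :
    -(firingCount idx m ⬝ᵥ M *ᵥ firingCount idx m) ≤ (∑ j, (2 * |d 0 j| + |M j j|)) * m := by
  induction m with
  | zero => simp [firingCount]
  | succ m ih =>
    set i := idx m
    have hrow : (M *ᵥ firingCount idx m) i = d 0 i - d m i := by
      rw [eq_sub_mulVec_firingCount hstep m]; simp
    have hterm : 2 * |d 0 i| + |M i i| ≤ ∑ j, (2 * |d 0 j| + |M j j|) :=
      single_le_sum (f := fun j => 2 * |d 0 j| + |M j j|) (fun _ _ => by positivity)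
        (mem_univ i)
    rw [firingCount_succ, neg_dotProduct_mulVec_add_single hM, hrow]
    push_cast
    have := hneg m
    linarith [neg_abs_le (d 0 i), neg_abs_le (M i i)]

theorem not_exists_infinite_firing (hM : M.IsSymm) (C : ℕ)
    (hC : ∀ x : ι → ℤ, x ⬝ᵥ x ≤ C * -(x ⬝ᵥ M *ᵥ x)) :
    ¬ ∃ (d : ℕ → ι → ℤ) (idx : ℕ → ι),
      (∀ m, d m (idx m) < 0) ∧ (∀ m, d (m + 1) = fun j => d m j - M j (idx m)) := by
  rintro ⟨d, idx, hneg, hstep⟩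
  set B := ∑ j, (2 * |d 0 j| + |M j j|)
  have hB : 0 ≤ B := sum_nonneg fun _ _ => by positivity
  have key (m : ℕ) : (m : ℤ) ^ 2 ≤ Fintype.card ι * C * B * m := by
    set x := firingCount idx m
    calc (m : ℤ) ^ 2 = (∑ j, x j) ^ 2 := by rw [sum_firingCount]
      _ ≤ Fintype.card ι * (x ⬝ᵥ x) := by
        simpa [dotProduct, sq] using sq_sum_le_card_mul_sum_sq (s := univ) (f := x)
      _ ≤ Fintype.card ι * (C * (B * m)) := by
        gcongr
        exact (hC x).trans (by gcongr; exact neg_dotProduct_mulVec_firingCount_le hM hneg hstep m)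
      _ = _ := by ring
  set K := (Fintype.card ι : ℤ) * C * B
  have hK : 0 ≤ K := by positivity
  have := key (K.toNat + 1)
  push_cast [Int.toNat_of_nonneg hK] at this
  nlinarith

end Firing

def dnIntersection (a b : ℕ) : ℤ :=
  if a = b then -2
  else if (a = 0 ∧ (b = 1 ∨ b = 2 ∨ b = 3)) ∨ (b = 0 ∧ (a = 1 ∨ a = 2 ∨ a = 3)) ∨
      (3 ≤ a ∧ b = a + 1) ∨ (3 ≤ b ∧ a = b + 1)
    then 1 else 0

theorem dnIntersection_comm (a b : ℕ) : dnIntersection a b = dnIntersection b a := by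
  unfold dnIntersection
  split_ifs <;> omega

def dnForm (n : ℕ) (y : ℕ → ℤ) : ℤ :=
  ∑ a ∈ range n, ∑ b ∈ range n, y a * dnIntersection a b * y b

theorem sum_range_dnIntersection_mul {n : ℕ} (hn : 4 ≤ n) (y : ℕ → ℤ) :
    ∑ b ∈ range n, dnIntersection n b * y b = y (n - 1) := by
  have hrow : ∀ b ∈ range n, dnIntersection n b * y b = if b = n - 1 then y b else 0 := by
    intro b hb
    rw [mem_range] at hb
    unfold dnIntersection
    split_ifs <;> first | ring1 | (exfalso; omega)
  rw [sum_congr rfl hrow, sum_ite_eq', if_pos (mem_range.mpr (by omega))]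

theorem dnForm_succ {n : ℕ} (hn : 4 ≤ n) (y : ℕ → ℤ) :
    dnForm (n + 1) y = dnForm n y + 2 * y (n - 1) * y n - 2 * y n ^ 2 := by
  have hcol : ∑ a ∈ range n, y a * dnIntersection a n * y n = y (n - 1) * y n := by
    rw [← sum_range_dnIntersection_mul hn y, sum_mul]
    exact sum_congr rfl fun a _ => by rw [dnIntersection_comm]; ring
  have hrow : ∑ b ∈ range n, y n * dnIntersection n b * y b = y n * y (n - 1) := by
    simp_rw [mul_assoc, ← mul_sum, sum_range_dnIntersection_mul hn]
  have hdiag : dnIntersection n n = -2 := if_pos rfl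
  simp only [dnForm, sum_range_succ, sum_add_distrib, hcol, hrow, hdiag]
  ring

/-- The last term lets the identity grow along the arm:
`2 y_N² - 4 y_N y_{N+1} + 4 y_{N+1}² = 2 (y_{N+1} - y_N)² + 2 y_{N+1}²`. -/
theorem neg_two_mul_dnForm_succ {N : ℕ} (hN : 3 ≤ N) (y : ℕ → ℤ) :
    -2 * dnForm (N + 1) y = (y 0 - 2 * y 1) ^ 2 + (y 0 - 2 * y 2) ^ 2 + 2 * (y 0 - y 3) ^ 2
      + 2 * ∑ a ∈ Ico 3 N, (y (a + 1) - y a) ^ 2 + 2 * y N ^ 2 := by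
  induction N, hN using Nat.le_induction with
  | base =>
    simp only [dnForm, dnIntersection, sum_range_succ, sum_range_zero, Ico_self, sum_empty]
    norm_num
    ring
  | succ N hN ih =>
    rw [dnForm_succ (by omega), sum_Ico_succ_top hN, Nat.add_sub_cancel]
    linear_combination ih

theorem neg_two_mul_dnForm {n : ℕ} (hn : 4 ≤ n) {y : ℕ → ℤ} (hy : y n = 0) :
    -2 * dnForm n y = (y 0 - 2 * y 1) ^ 2 + (y 0 - 2 * y 2) ^ 2 + 2 * (y 0 - y 3) ^ 2
      + 2 * ∑ a ∈ Ico 3 n, (y (a + 1) - y a) ^ 2 := by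
  obtain ⟨N, rfl⟩ : ∃ N, n = N + 1 := ⟨n - 1, by omega⟩
  rw [neg_two_mul_dnForm_succ (by omega), sum_Ico_succ_top (by omega), hy]
  ring

theorem sq_le_card_mul_sum_sq_sub {n a : ℕ} (ha : a ≤ n) {y : ℕ → ℤ} (hy : y n = 0) :
    y a ^ 2 ≤ (n - a : ℕ) * ∑ b ∈ Ico a n, (y (b + 1) - y b) ^ 2 := by
  have := sq_sum_le_card_mul_sum_sq (s := Ico a n) (f := fun b => y (b + 1) - y b)
  rw [sum_Ico_sub _ ha, hy, Nat.card_Ico] at this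
  simpa using this

theorem sq_le_neg_dnForm {n : ℕ} (hn : 4 ≤ n) {y : ℕ → ℤ} (hy : y n = 0) {a : ℕ} (ha : a < n) :
    y a ^ 2 ≤ 2 * (n + 1) * -dnForm n y := by
  have hsos := neg_two_mul_dnForm hn hy
  set Q := ∑ a ∈ Ico 3 n, (y (a + 1) - y a) ^ 2
  have hQ : 0 ≤ Q := sum_nonneg fun _ _ => sq_nonneg _
  have hchain : ∀ a, 3 ≤ a → a < n → y a ^ 2 ≤ n * Q := by
    intro a h3 han
    calc y a ^ 2 ≤ (n - a : ℕ) * ∑ b ∈ Ico a n, (y (b + 1) - y b) ^ 2 :=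
          sq_le_card_mul_sum_sq_sub han.le hy
      _ ≤ n * Q :=
        mul_le_mul (by exact_mod_cast Nat.sub_le n a)
          (sum_le_sum_of_subset_of_nonneg (Ico_subset_Ico_left h3) fun _ _ _ => sq_nonneg _)
          (sum_nonneg fun _ _ => sq_nonneg _) (by positivity)
  have h3 := hchain 3 le_rfl (by omega)
  have hn0 : (4 : ℤ) ≤ n := by exact_mod_cast hn
  have h0 : y 0 ^ 2 ≤ 2 * (n + 1) * -dnForm n y := by
    nlinarith [sq_nonneg (y 0 - 2 * y 1), sq_nonneg (y 0 - 2 * y 2), sq_nonneg (y 0 - 2 * y 3)]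
  rcases (by omega : a = 0 ∨ a = 1 ∨ a = 2 ∨ 3 ≤ a) with rfl | rfl | rfl | h3a
  · exact h0
  · nlinarith [sq_nonneg (y 0 - 2 * y 2), sq_nonneg (y 0 - y 3), sq_nonneg (y 0 - y 1)]
  · nlinarith [sq_nonneg (y 0 - 2 * y 1), sq_nonneg (y 0 - y 3), sq_nonneg (y 0 - y 2)]
  · nlinarith [hchain a h3a ha, sq_nonneg (y 0 - 2 * y 1), sq_nonneg (y 0 - 2 * y 2),
      sq_nonneg (y 0 - y 3)]

theorem isSymm_of_dnIntersection {n : ℕ} {M : Matrix (Fin n) (Fin n) ℤ}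
    (hM : ∀ i j : Fin n, M i j = dnIntersection i j) : M.IsSymm :=
  IsSymm.ext fun i j => by rw [hM, hM, dnIntersection_comm]

theorem dotProduct_mulVec_eq_dnForm {n : ℕ} {M : Matrix (Fin n) (Fin n) ℤ}
    (hM : ∀ i j : Fin n, M i j = dnIntersection i j) (x : Fin n → ℤ) :
    x ⬝ᵥ M *ᵥ x = dnForm n (fun a => if h : a < n then x ⟨a, h⟩ else 0) := by
  simp only [dnForm, ← Fin.sum_univ_eq_sum_range, Fin.is_lt, dif_pos, Fin.eta, dotProduct, mulVec,
    hM, mul_sum, mul_assoc]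

theorem dotProduct_self_le_neg_dotProduct_mulVec {n : ℕ} (hn : 4 ≤ n)
    {M : Matrix (Fin n) (Fin n) ℤ} (hM : ∀ i j : Fin n, M i j = dnIntersection i j)
    (x : Fin n → ℤ) : x ⬝ᵥ x ≤ (2 * n * (n + 1) : ℕ) * -(x ⬝ᵥ M *ᵥ x) := by
  set y : ℕ → ℤ := fun a => if h : a < n then x ⟨a, h⟩ else 0
  have hxy : x ⬝ᵥ x = ∑ a ∈ range n, y a ^ 2 := by
    simp only [dotProduct, ← Fin.sum_univ_eq_sum_range, y, Fin.is_lt, dif_pos, Fin.eta, sq]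
  have hy : y n = 0 := dif_neg (lt_irrefl n)
  calc x ⬝ᵥ x ≤ ∑ _a ∈ range n, 2 * (n + 1) * -dnForm n y := by
        rw [hxy]
        exact sum_le_sum fun a ha => sq_le_neg_dnForm hn hy (mem_range.mp ha)
    _ = _ := by
      rw [sum_const, card_range, dotProduct_mulVec_eq_dnForm hM]
      push_cast
      ring

theorem statement12_general (n : ℕ) (hn : 4 ≤ n) (M : Matrix (Fin n) (Fin n) ℤ)
    (hM : ∀ i j : Fin n, M i j =
      if (i : ℕ) = (j : ℕ) then -2
      else if ((i : ℕ) = 0 ∧ ((j : ℕ) = 1 ∨ (j : ℕ) = 2 ∨ (j : ℕ) = 3)) ∨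
          ((j : ℕ) = 0 ∧ ((i : ℕ) = 1 ∨ (i : ℕ) = 2 ∨ (i : ℕ) = 3)) ∨
          (3 ≤ (i : ℕ) ∧ (j : ℕ) = (i : ℕ) + 1) ∨ (3 ≤ (j : ℕ) ∧ (i : ℕ) = (j : ℕ) + 1)
        then 1 else 0)
    (ord : ℕ → ℕ) :
    ¬ ∃ (d : ℕ → Fin n → ℤ) (idx : ℕ → Fin n),
        (∀ m, d m (idx m) < 0) ∧
        (∀ m (j : Fin n), d m j < 0 → ord (idx m) ≤ ord j) ∧
        (∀ m, d (m + 1) = fun j => d m j - M j (idx m)) := by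
  rintro ⟨d, idx, hneg, -, hstep⟩
  exact not_exists_infinite_firing (isSymm_of_dnIntersection hM) _
    (dotProduct_self_le_neg_dotProduct_mulVec hn hM) ⟨d, idx, hneg, hstep⟩

/-- let `M` be the intersection matrix of the `D_n` exceptional
configuration (`M_{ii} = -2`, `M_{ij} = 1` if `E_i` and `E_j` are adjacent in the
dual graph of `D_n`, else `0`) and order the indices by `1 ≺ 2 ≺ 0 ≺ 3 ≺ ⋯ ≺ n-1`
(encoded by the rank function `ord`).  Then there is no infinite sequence
`d⁰ = d, d^{m+1} = d^m - M·e_{i_m}` in which every `d^m` has a negative coordinate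
and `i_m` is the `≺`-least index with `(d^m)_{i_m} < 0`; i.e. the procedure
"subtract the column of `M` at the least negative coordinate" always terminates at a
vector with all coordinates nonnegative. -/
theorem statement12 (n : ℕ) (hn : 4 ≤ n) (M : Matrix (Fin n) (Fin n) ℤ)
    (hM : ∀ i j : Fin n, M i j =
      if (i : ℕ) = (j : ℕ) then -2
      else if ((i : ℕ) = 0 ∧ ((j : ℕ) = 1 ∨ (j : ℕ) = 2 ∨ (j : ℕ) = 3)) ∨
          ((j : ℕ) = 0 ∧ ((i : ℕ) = 1 ∨ (i : ℕ) = 2 ∨ (i : ℕ) = 3)) ∨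
          (3 ≤ (i : ℕ) ∧ (j : ℕ) = (i : ℕ) + 1) ∨ (3 ≤ (j : ℕ) ∧ (i : ℕ) = (j : ℕ) + 1)
        then 1 else 0)
    (ord : ℕ → ℕ)
    (hord : ∀ a, ord a = if a = 1 then 0 else if a = 2 then 1 else if a = 0 then 2 else a) :
    ¬ ∃ (d : ℕ → Fin n → ℤ) (idx : ℕ → Fin n),
        (∀ m, d m (idx m) < 0) ∧
        (∀ m (j : Fin n), d m j < 0 → ord (idx m) ≤ ord j) ∧
        (∀ m, d (m + 1) = fun j => d m j - M j (idx m)) :=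
  statement12_general n hn M hM ord
end

section
/- Let n ≥ 4 and let k ≥ 1 be odd. In the polynomial ring ℂ[x₂, x_{n−1}, y₀, y₁, …, y_{n−1}] with the ℤⁿ-weights inherited from the D_n grading (w(x₂) = e₂, w(x_{n−1}) = e_{n−1}, w(y₀) = −2e₀ + e₁ + e₂ + e₃, w(y₁) = e₀ − 2e₁, w(y₂) = e₀ − 2e₂, w(y₃) = e₀ − 2e₃ + e₄, w(y_m) = e_{m−1} − 2e_m + e_{m+1} for 4 ≤ m ≤ n−2, w(y_{n−1}) = e_{n−2} − 2e_{n−1}), a monomial has weight k·e₁ and is not divisible by y₂x₂² if and only if it equals M_a for some integer a ≥ 0, where M_a = x₂ · x_{n−1}^{n(k−1)/2 + 1 + 2a} · y₀^{k+2a} · y₁^{a} · y₂^{(k+1)/2 + a} · ∏_{j=3}^{n−1} y_j^{j(k−1)/2 + 1 + 2a}. -/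
/-!
Write `d(z)` for the exponent of the variable `z`. The `e₁` and `e₂` coordinates of the weight
equation give `d(y₀) = k + 2 d(y₁)` and `d(x₂) = 2 d(y₂) - d(y₀)`, so `d(x₂)` is odd. If it were
`≥ 2`, then `y₂x₂²` not dividing the monomial would force `d(y₂) = 0`, hence `d(x₂) = -d(y₀) < 0`;
so `d(x₂) = 1`. The coordinates `e₃, …, e_{n-1}` say that the exponents along the chain
`y₀, y₃, y₄, …, y_{n-1}, x_{n-1}` have vanishing second differences, so they form an arithmetic
progression, whose first two terms are fixed by the `e₀` coordinate; with `a = d(y₁)` this is `M_a`.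
-/

/-- Weights of the `ℤⁿ`-grading on `ℂ[x₂, x_{n-1}, y₀, y₁, …, y_{n-1}]` inherited from
the `D_n` grading: the variables are indexed by `Fin (n+2)` with `0 ↦ x₂`,
`1 ↦ x_{n-1}` and `2+m ↦ y_m`; the coordinate `i : Fin n` corresponds to the basis
vector `e_i` of `ℤⁿ`.  Thus `w(x₂) = e₂`, `w(x_{n-1}) = e_{n-1}`,
`w(y₀) = -2e₀+e₁+e₂+e₃`, `w(y₁) = e₀-2e₁`, `w(y₂) = e₀-2e₂`, `w(y₃) = e₀-2e₃+e₄`,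
`w(y_m) = e_{m-1}-2e_m+e_{m+1}` for `4 ≤ m ≤ n-2` and `w(y_{n-1}) = e_{n-2}-2e_{n-1}`. -/
def wQ (n : ℕ) (v : Fin (n + 2)) (i : Fin n) : ℤ :=
  if (v : ℕ) = 0 then (if (i : ℕ) = 2 then 1 else 0)
  else if (v : ℕ) = 1 then (if (i : ℕ) = n - 1 then 1 else 0)
  else if (v : ℕ) = 2 then
    (if (i : ℕ) = 0 then -2 else if (i : ℕ) = 1 ∨ (i : ℕ) = 2 ∨ (i : ℕ) = 3 then 1 else 0)
  else if (v : ℕ) = 3 then (if (i : ℕ) = 0 then 1 else if (i : ℕ) = 1 then -2 else 0)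
  else if (v : ℕ) = 4 then (if (i : ℕ) = 0 then 1 else if (i : ℕ) = 2 then -2 else 0)
  else if (v : ℕ) = 5 then
    (if (i : ℕ) = 0 then 1 else 0) + (if (i : ℕ) = 3 then -2 else 0)
      + (if (i : ℕ) = 4 then 1 else 0)
  else
    (if (i : ℕ) = (v : ℕ) - 3 then 1 else 0) + (if (i : ℕ) = (v : ℕ) - 2 then -2 else 0)
      + (if (i : ℕ) = (v : ℕ) - 1 then 1 else 0)

/-- The exponent vector of the monomial
`M_a = x₂ · x_{n-1}^{n(k-1)/2 + 1 + 2a} · y₀^{k+2a} · y₁^a · y₂^{(k+1)/2 + a} ·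
∏_{j=3}^{n-1} y_j^{j(k-1)/2 + 1 + 2a}` (variable indices as in `wQ`). -/
def expM (n k a : ℕ) (v : Fin (n + 2)) : ℕ :=
  if (v : ℕ) = 0 then 1
  else if (v : ℕ) = 1 then n * ((k - 1) / 2) + 1 + 2 * a
  else if (v : ℕ) = 2 then k + 2 * a
  else if (v : ℕ) = 3 then a
  else if (v : ℕ) = 4 then (k + 1) / 2 + a
  else ((v : ℕ) - 2) * ((k - 1) / 2) + 1 + 2 * a

open Function

/-- `weightRow n i e` is the `e_i`-coordinate of the weight of the monomial with exponent
vector `e`, the variables being numbered as in `wQ`. -/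
def weightRow (n i : ℕ) : (ℕ → ℤ) →ₗ[ℤ] ℤ where
  toFun e :=
    if i = 0 then -2 * e 2 + e 3 + e 4 + e 5
    else if i = 1 then e 2 - 2 * e 3
    else if i = 2 then e 0 + e 2 - 2 * e 4
    else e (if i = 3 then 2 else i + 1) - 2 * e (i + 2) + e (if i + 1 = n then 1 else i + 3)
  map_add' e e' := by simp only [Pi.add_apply]; split_ifs <;> ring
  map_smul' c e := by simp only [Pi.smul_apply, smul_eq_mul, RingHom.id_apply]; split_ifs <;> ring

theorem weightRow_apply (n i : ℕ) (e : ℕ → ℤ) : weightRow n i e =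
    if i = 0 then -2 * e 2 + e 3 + e 4 + e 5
    else if i = 1 then e 2 - 2 * e 3
    else if i = 2 then e 0 + e 2 - 2 * e 4
    else e (if i = 3 then 2 else i + 1) - 2 * e (i + 2) + e (if i + 1 = n then 1 else i + 3) :=
  rfl

theorem wQ_eq_weightRow_single {n : ℕ} (hn : 4 ≤ n) (v : Fin (n + 2)) (i : Fin n) :
    wQ n v i = weightRow n i (Pi.single (v : ℕ) 1) := by
  obtain ⟨v, hv⟩ := v
  obtain ⟨i, hi⟩ := i
  simp only [wQ, weightRow_apply, Pi.single_apply]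
  obtain rfl | rfl | rfl | rfl | rfl | rfl | hv6 :
    v = 0 ∨ v = 1 ∨ v = 2 ∨ v = 3 ∨ v = 4 ∨ v = 5 ∨ 6 ≤ v := by omega
  iterate 6 (simp only [↓reduceIte, Nat.reduceEqDiff, OfNat.ofNat_ne_zero, OfNat.zero_ne_ofNat,
      OfNat.ofNat_ne_one, one_ne_zero, zero_ne_one]; split_ifs <;> lia)
  have hprev : (if i = 3 then 2 else i + 1) = v ↔ i = v - 1 := by split_ifs <;> omega
  have hnext : (if i + 1 = n then 1 else i + 3) = v ↔ i = v - 3 := by split_ifs <;> omega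
  simp only [hprev, hnext, show v ≠ 0 by omega, show v ≠ 1 by omega, show v ≠ 2 by omega,
    show v ≠ 3 by omega, show v ≠ 4 by omega, show v ≠ 5 by omega, if_false]
  split_ifs <;> omega

theorem extend_val_of_lt {N : ℕ} (g : Fin N → ℤ) {m : ℕ} (hm : m < N) :
    extend Fin.val g 0 m = g ⟨m, hm⟩ :=
  Fin.val_injective.extend_apply g 0 ⟨m, hm⟩

theorem sum_smul_single_val_eq_extend {N : ℕ} (g : Fin N → ℤ) :
    ∑ v : Fin N, g v • Pi.single (v : ℕ) (1 : ℤ) = extend Fin.val g 0 := by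
  funext m
  simp only [Finset.sum_apply, Pi.smul_apply, Pi.single_apply, smul_eq_mul, mul_ite, mul_one,
    mul_zero]
  by_cases hm : m < N
  · rw [extend_val_of_lt g hm, Finset.sum_eq_single ⟨m, hm⟩
      (fun v _ hv => if_neg (Fin.val_injective.ne hv).symm) (by simp), if_pos rfl]
  · rw [extend_apply' _ _ _ (by rintro ⟨v, rfl⟩; exact hm v.isLt)]
    exact Finset.sum_eq_zero fun v _ => if_neg (by omega)

theorem sum_mul_wQ_eq_weightRow {n : ℕ} (hn : 4 ≤ n) (d : Fin (n + 2) → ℕ) (i : Fin n) :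
    ∑ v, (d v : ℤ) * wQ n v i = weightRow n i (extend Fin.val (fun v => (d v : ℤ)) 0) := by
  simp only [wQ_eq_weightRow_single hn, ← sum_smul_single_val_eq_extend, map_sum, map_smul, smul_eq_mul]

theorem eq_add_mul_of_sub_two_mul_add_eq_zero {f : ℕ → ℤ} {lo hi : ℕ}
    (h : ∀ p, lo ≤ p → p + 2 ≤ hi → f p - 2 * f (p + 1) + f (p + 2) = 0) :
    ∀ j, lo + j ≤ hi → f (lo + j) = f lo + j * (f (lo + 1) - f lo) := by
  intro j
  induction j using Nat.twoStepInduction with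
  | zero => simp
  | one => intro; push_cast; ring
  | more j ih₀ ih₁ =>
    intro hj
    have hrec := h (lo + j) (by omega) (by omega)
    rw [← add_assoc] at ih₁ ⊢
    push_cast at ih₀ ih₁ ⊢
    linear_combination hrec + 2 * ih₁ (by omega) - ih₀ (by omega)

/-- The variable (numbered as in `wQ`) at position `p ∈ [2, n]` of the chain
`y₀, y₃, y₄, …, y_{n-1}, x_{n-1}`. -/
def chainVar (n p : ℕ) : ℕ := if p = 2 then 2 else if p = n then 1 else p + 2

theorem chainVar_two (n : ℕ) : chainVar n 2 = 2 := if_pos rfl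

theorem chainVar_self {n : ℕ} (hn : n ≠ 2) : chainVar n n = 1 := by simp [chainVar, hn]

theorem chainVar_of_lt {n p : ℕ} (hp : 2 < p) (hpn : p < n) : chainVar n p = p + 2 := by
  simp [chainVar, hp.ne', hpn.ne]

theorem weightRow_succ_eq_chainVar {n p : ℕ} (hp : 2 ≤ p) (hpn : p + 2 ≤ n) (e : ℕ → ℤ) :
    weightRow n (p + 1) e =
      e (chainVar n p) - 2 * e (chainVar n (p + 1)) + e (chainVar n (p + 2)) := by
  have hprev : (if p + 1 = 3 then 2 else p + 1 + 1) = chainVar n p := by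
    unfold chainVar; split_ifs <;> omega
  have hnext : (if p + 1 + 1 = n then 1 else p + 1 + 3) = chainVar n (p + 2) := by
    unfold chainVar; split_ifs <;> omega
  rw [weightRow_apply, if_neg (by omega), if_neg (by omega), if_neg (by omega), hprev, hnext,
    ← chainVar_of_lt (n := n) (p := p + 1) (by omega) (by omega)]

/-- The exponent vector of `M_a` for `k = 2t + 1`, read along the chain. -/
def IsMExponent (n t a : ℕ) (e : ℕ → ℤ) : Prop :=
  e 0 = 1 ∧ e 3 = a ∧ e 4 = t + 1 + a ∧
    ∀ p, 2 ≤ p → p ≤ n → e (chainVar n p) = p * t + 1 + 2 * a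

theorem isMExponent_of_weightRow {n t : ℕ} (hn : 4 ≤ n) {e : ℕ → ℤ} (he : ∀ m, 0 ≤ e m)
    (hrow : ∀ i < n, weightRow n i e = if i = 1 then (2 * t + 1 : ℤ) else 0)
    (hdvd : ¬(2 ≤ e 0 ∧ 1 ≤ e 4)) : IsMExponent n t (e 3).toNat e := by
  have r0 := hrow 0 (by omega)
  have r1 := hrow 1 (by omega)
  have r2 := hrow 2 (by omega)
  simp only [weightRow_apply, ↓reduceIte, OfNat.ofNat_ne_zero, OfNat.ofNat_ne_one, one_ne_zero,
    zero_ne_one] at r0 r1 r2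
  have ha : e 3 = (e 3).toNat := (Int.toNat_of_nonneg (he 3)).symm
  have h0 : e 0 = 1 := by have := he 0; have := he 4; omega
  have h4 : e 4 = t + 1 + e 3 := by omega
  have h2 : e (chainVar n 2) = 2 * t + 1 + 2 * e 3 := by rw [chainVar_two]; omega
  have h3 : e (chainVar n 3) = 3 * t + 1 + 2 * e 3 := by
    rw [show chainVar n 3 = 5 from chainVar_of_lt (by omega) (by omega)]; omega
  have hap := eq_add_mul_of_sub_two_mul_add_eq_zero (f := fun p => e (chainVar n p)) (lo := 2)
    (hi := n) fun p hp hpn => by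
      rw [← weightRow_succ_eq_chainVar hp hpn, hrow (p + 1) (by omega), if_neg (by omega)]
  refine ⟨h0, ha, by rw [← ha]; exact h4, fun p hp hpn => ?_⟩
  have hp' := hap (p - 2) (by omega)
  simp only [Nat.add_sub_cancel' hp] at hp'
  rw [hp', h2, h3, ← ha, Nat.cast_sub hp]
  ring

theorem weightRow_of_isMExponent {n t a : ℕ} (hn : 4 ≤ n) {e : ℕ → ℤ}
    (he : IsMExponent n t a e) :
    ∀ i < n, weightRow n i e = if i = 1 then (2 * t + 1 : ℤ) else 0 := by
  obtain ⟨h0, h3, h4, hchain⟩ := he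
  have h2 : e 2 = 2 * t + 1 + 2 * a := by
    rw [← chainVar_two n, hchain 2 le_rfl (by omega)]; push_cast; ring
  have h5 : e 5 = 3 * t + 1 + 2 * a := by
    rw [← show chainVar n 3 = 5 from chainVar_of_lt (by omega) (by omega),
      hchain 3 (by omega) (by omega)]
    push_cast; ring
  intro i hi
  obtain rfl | rfl | rfl | h3i : i = 0 ∨ i = 1 ∨ i = 2 ∨ 3 ≤ i := by omega
  · simp only [weightRow_apply, ↓reduceIte, h2, h3, h4, h5, zero_ne_one]; ring
  · simp [weightRow_apply, h2, h3]
  · simp only [weightRow_apply, OfNat.ofNat_ne_zero, ↓reduceIte, OfNat.ofNat_ne_one, h0, h2, h4]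
    ring
  · obtain ⟨p, rfl⟩ : ∃ p, i = p + 1 := ⟨i - 1, by omega⟩
    rw [weightRow_succ_eq_chainVar (by omega) (by omega), hchain p (by omega) (by omega),
      hchain (p + 1) (by omega) (by omega), hchain (p + 2) (by omega) (by omega),
      if_neg (by omega)]
    push_cast; ring

theorem isMExponent_extend_iff {n t a : ℕ} (hn : 4 ≤ n) (d : Fin (n + 2) → ℕ) :
    IsMExponent n t a (extend Fin.val (fun v => (d v : ℤ)) 0) ↔
      ∀ v, d v = expM n (2 * t + 1) a v := by
  have hk₁ : (2 * t + 1 - 1) / 2 = t := by omega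
  have hk₂ : (2 * t + 1 + 1) / 2 = t + 1 := by omega
  have he := fun m (hm : m < n + 2) => extend_val_of_lt (fun v => (d v : ℤ)) hm
  constructor
  · rintro ⟨h0, h3, h4, hchain⟩ ⟨m, hm⟩
    rw [← Nat.cast_inj (R := ℤ), ← he m hm]
    simp only [expM, hk₁, hk₂]
    obtain rfl | rfl | rfl | rfl | rfl | h5 :
      m = 0 ∨ m = 1 ∨ m = 2 ∨ m = 3 ∨ m = 4 ∨ 5 ≤ m := by omega
    · simpa using h0
    · simpa [chainVar_self (show n ≠ 2 by omega)] using hchain n (by omega) le_rfl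
    · simpa [chainVar_two] using hchain 2 le_rfl (by omega)
    · simpa using h3
    · simpa using h4
    · have hm' := hchain (m - 2) (by omega) (by omega)
      rw [chainVar_of_lt (by omega) (by omega), Nat.sub_add_cancel (by omega)] at hm'
      simp [hm', show m ≠ 0 by omega, show m ≠ 1 by omega, show m ≠ 2 by omega,
        show m ≠ 3 by omega, show m ≠ 4 by omega]
  · intro hd
    have hd' : ∀ m (hm : m < n + 2), extend Fin.val (fun v => (d v : ℤ)) 0 m =
        expM n (2 * t + 1) a ⟨m, hm⟩ := fun m hm => by rw [he m hm, hd]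
    refine ⟨by rw [hd' 0 (by omega)]; simp [expM], by rw [hd' 3 (by omega)]; simp [expM],
      by rw [hd' 4 (by omega)]; simp [expM, hk₂], fun p hp hpn => ?_⟩
    obtain rfl | rfl | hp' : p = 2 ∨ p = n ∨ (2 < p ∧ p < n) := by omega
    · rw [chainVar_two, hd' 2 (by omega)]; simp [expM]
    · rw [chainVar_self (by omega), hd' 1 (by omega)]; simp [expM]
    · rw [chainVar_of_lt hp'.1 hp'.2, hd' _ (by omega)]
      simp only [expM, if_neg (show p + 2 ≠ 0 by omega), if_neg (show p + 2 ≠ 1 by omega),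
        if_neg (show p + 2 ≠ 2 by omega), if_neg (show p + 2 ≠ 3 by omega),
        if_neg (show p + 2 ≠ 4 by omega)]
      rw [hk₁, Nat.add_sub_cancel]
      push_cast; ring

/-- for `n ≥ 4` and odd `k`, a monomial of
`ℂ[x₂, x_{n-1}, y₀, …, y_{n-1}]` (given by its exponent vector `d`) has weight `k·e₁`
and is not divisible by `y₂x₂²` if and only if it equals `M_a` for some `a ≥ 0`. -/
theorem statement13 (n k : ℕ) (hn : 4 ≤ n) (hk : Odd k) (d : Fin (n + 2) →₀ ℕ) :
    ((∀ i : Fin n, ∑ v, (d v : ℤ) * wQ n v i = if (i : ℕ) = 1 then (k : ℤ) else 0) ∧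
      ¬(2 ≤ d ⟨0, by omega⟩ ∧ 1 ≤ d ⟨4, by omega⟩)) ↔
    ∃ a : ℕ, ∀ v : Fin (n + 2), d v = expM n k a v := by
  obtain ⟨t, rfl⟩ := hk
  set e := extend Fin.val (fun v => (d v : ℤ)) 0
  have he : ∀ m, 0 ≤ e m := fun m => by
    by_cases hm : m < n + 2
    · simp only [e, extend_val_of_lt _ hm]; positivity
    · have hnot : ¬∃ v : Fin (n + 2), (v : ℕ) = m := fun ⟨v, hv⟩ => hm (hv ▸ v.isLt)
      simp only [e, extend_apply' _ _ _ hnot, Pi.zero_apply, le_refl]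
  have hrow : (∀ i : Fin n, ∑ v, (d v : ℤ) * wQ n v i =
        if (i : ℕ) = 1 then ((2 * t + 1 : ℕ) : ℤ) else 0) ↔
      ∀ i < n, weightRow n i e = if i = 1 then (2 * t + 1 : ℤ) else 0 := by
    simp only [sum_mul_wQ_eq_weightRow hn, Fin.forall_iff]; push_cast; rfl
  have hdvd : (2 ≤ d ⟨0, by omega⟩ ∧ 1 ≤ d ⟨4, by omega⟩) ↔ (2 ≤ e 0 ∧ 1 ≤ e 4) := by
    simp only [e, extend_val_of_lt _ (show 0 < n + 2 by omega),
      extend_val_of_lt _ (show 4 < n + 2 by omega)]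
    norm_cast
  simp only [hrow, hdvd, ← isMExponent_extend_iff hn]
  constructor
  · rintro ⟨hweight, hnd⟩
    exact ⟨_, isMExponent_of_weightRow hn he hweight hnd⟩
  · rintro ⟨a, ha⟩
    have h0 : e 0 = 1 := ha.1
    exact ⟨weightRow_of_isMExponent hn ha, by omega⟩
end
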